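/- arXiv:2501.06902 — 8 statements merged into one kernel-verified Lean document; each statement's English description precedes it below -/
import Mathlib

section
/- If T and T' are trees of respective orders n and n' with n' ≥ n ≥ 2, then the decycling number of the Cartesian product T □ T' satisfies ∇(T □ T') ≥ n - 1. -/
/-!
Suppose a decycling set `S` of `T □ T'` has fewer than `n - 1 ≤ n' - 1` vertices. Then its
projections miss two vertices `a ≠ b` of `T` and two vertices `c ≠ d` of `T'`, so the columns
`{a, b} × T'` and the rows `T × {c, d}` survive. Since both factors are connected, these four
lines contain a cycle: if `v` is the first step of the path from `a` to `b` in `T`, the edge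
`(a, c) — (v, c)` is not a bridge, because `(a, c)` reaches `(v, c)` by going up column `a`, along
row `d`, down column `b` and back along row `c` on the rest of that path.
-/

open SimpleGraph

/-- The star `S_m = K_{1,m-1}` on `m` vertices, with center the vertex `0`. -/
def starGraph (m : ℕ) : SimpleGraph (Fin m) where
  Adj i j := i ≠ j ∧ (i.val = 0 ∨ j.val = 0)
  symm := ⟨fun _ _ h => ⟨h.1.symm, h.2.symm⟩⟩
  loopless := ⟨fun _ h => h.1 rfl⟩

/-- The decycling number: the minimum size of a set of vertices whose removal
leaves an acyclic graph. -/
noncomputable def decyclingNumber {V : Type*} [Fintype V] (G : SimpleGraph V) : ℕ :=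
  sInf {k | ∃ S : Finset V, S.card = k ∧ (G.induce ((↑S : Set V)ᶜ)).IsAcyclic}

/-- The forest number: the maximum size of a set of vertices inducing a forest. -/
noncomputable def forestNumber {V : Type*} [Fintype V] (G : SimpleGraph V) : ℕ :=
  sSup {k | ∃ S : Finset V, S.card = k ∧ (G.induce (↑S : Set V)).IsAcyclic}

/-- The matching number: the maximum size of a set of pairwise non-incident edges. -/
noncomputable def matchingNumber {V : Type*} [Fintype V] (G : SimpleGraph V) : ℕ :=
  sSup {k | ∃ M : Finset (Sym2 V), ↑M ⊆ G.edgeSet ∧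
    (M : Set (Sym2 V)).Pairwise (fun e f => ∀ v, ¬(v ∈ e ∧ v ∈ f)) ∧ M.card = k}

namespace SimpleGraph

variable {U V α : Type*} {K : SimpleGraph U} {G : SimpleGraph V}

theorem Reachable.map_deleteEdges (f : K →g G) (π : V → α) {x y : V}
    (hf : ∀ ⦃u u'⦄, K.Adj u u' → s(π (f u), π (f u')) ≠ s(π x, π y)) {u v : U}
    (h : K.Reachable u v) : (G.deleteEdges {s(x, y)}).Reachable (f u) (f v) :=
  h.map ⟨f, fun huu' => deleteEdges_adj.2 ⟨f.map_adj huu', fun he =>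
    hf huu' (by simpa using congrArg (Sym2.map π) (Set.mem_singleton_iff.1 he))⟩⟩

theorem Reachable.exists_adj_reachable_deleteEdges {a b : V} (h : G.Reachable a b)
    (hab : a ≠ b) : ∃ v, G.Adj a v ∧ (G.deleteEdges {s(a, v)}).Reachable v b := by
  obtain ⟨p, hp⟩ := h.exists_isPath
  cases p with
  | nil => exact absurd rfl hab
  | cons hav p =>
    refine ⟨_, hav, ⟨p.toDeleteEdge _ fun he => ?_⟩⟩
    exact ((Walk.cons_isPath_iff _ _).1 hp).2 (p.fst_mem_support_of_mem_edges he)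

variable {W : Type*} {H : SimpleGraph W} {s : Set (V × W)}

theorem not_isAcyclic_induce_boxProd_of_rows_columns (hG : G.Preconnected)
    (hH : H.Preconnected) {a b : V} {c d : W} (hab : a ≠ b) (hcd : c ≠ d)
    (ha : ∀ w, (a, w) ∈ s) (hb : ∀ w, (b, w) ∈ s) (hc : ∀ v, (v, c) ∈ s)
    (hd : ∀ v, (v, d) ∈ s) : ¬((G □ H).induce s).IsAcyclic := by
  obtain ⟨v, hav, hvb⟩ := (hG a b).exists_adj_reachable_deleteEdges hab
  let column (x : V) (hx : ∀ w, (x, w) ∈ s) : H →g (G □ H).induce s :=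
    ⟨fun w => ⟨(x, w), hx w⟩, (boxProdRight G H x).map_adj_iff.2⟩
  let row (y : W) (hy : ∀ v, (v, y) ∈ s) : G →g (G □ H).induce s :=
    ⟨fun v => ⟨(v, y), hy v⟩, (boxProdLeft G H y).map_adj_iff.2⟩
  intro hacyc
  refine isBridge_iff.1 (isAcyclic_iff_forall_adj_isBridge.1 hacyc ((row c hc).map_adj hav)) ?_
  have hdiag (x : V) : s(x, x) ≠ s(a, v) :=
    fun h => hav.ne (Sym2.mk_isDiag_iff.1 (h ▸ Sym2.mk_isDiag_iff.2 rfl))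
  refine ((hH c d).map_deleteEdges (column a ha) (Prod.fst ∘ Subtype.val) ?_).trans <|
    ((hG a b).map_deleteEdges (row d hd) (Prod.snd ∘ Subtype.val) ?_).trans <|
    ((hH d c).map_deleteEdges (column b hb) (Prod.fst ∘ Subtype.val) ?_).trans <|
    hvb.symm.map_deleteEdges ((row c hc).comp (.ofLE (deleteEdges_le _)))
      (Prod.fst ∘ Subtype.val) ?_
  · exact fun _ _ _ => hdiag a
  · exact fun _ _ _ => show s(d, d) ≠ s(c, c) by simpa using hcd.symm
  · exact fun _ _ _ => hdiag b
  · exact fun _ _ h => (deleteEdges_adj.1 h).2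

end SimpleGraph

theorem le_decyclingNumber {V : Type*} [Fintype V] {G : SimpleGraph V} {k : ℕ}
    (h : ∀ S : Finset V, (G.induce (↑S : Set V)ᶜ).IsAcyclic → k ≤ S.card) :
    k ≤ decyclingNumber G := by
  refine le_csInf ⟨_, Finset.univ, rfl, ?_⟩ fun _ ⟨S, hS, hacyc⟩ => hS ▸ h S hacyc
  have : IsEmpty ((↑(Finset.univ : Finset V) : Set V)ᶜ : Set V) := by simp
  exact IsAcyclic.of_subsingleton

theorem Finset.exists_ne_notMem_image_of_card_add_one_lt {α β : Type*} [Fintype α]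
    [DecidableEq α] (f : β → α) (S : Finset β) (h : S.card + 1 < Fintype.card α) :
    ∃ a b, a ≠ b ∧ a ∉ S.image f ∧ b ∉ S.image f := by
  have : 1 < (S.image f)ᶜ.card := by
    rw [Finset.card_compl]
    have := S.card_image_le (f := f)
    omega
  obtain ⟨a, ha, b, hb, hab⟩ := Finset.one_lt_card.1 this
  exact ⟨a, b, hab, Finset.mem_compl.1 ha, Finset.mem_compl.1 hb⟩

theorem decycling_boxProd_trees_lower_bound_general
    {V W : Type*} [Fintype V] [Fintype W]
    (T : SimpleGraph V) (T' : SimpleGraph W) (n n' : ℕ)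
    (hn : Fintype.card V = n) (hn' : Fintype.card W = n')
    (hnn' : n ≤ n')
    (hT : T.IsTree) (hT' : T'.IsTree) :
    n - 1 ≤ decyclingNumber (T.boxProd T') := by
  classical
  refine le_decyclingNumber fun S hS => ?_
  by_contra! hS_card
  obtain ⟨a, b, hab, ha, hb⟩ := S.exists_ne_notMem_image_of_card_add_one_lt Prod.fst (by omega)
  obtain ⟨c, d, hcd, hc, hd⟩ := S.exists_ne_notMem_image_of_card_add_one_lt Prod.snd (by omega)
  have column (x : V) (hx : x ∉ S.image Prod.fst) (w : W) : (x, w) ∈ (↑S : Set (V × W))ᶜ :=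
    fun hxw => hx (Finset.mem_image_of_mem _ hxw)
  have row (y : W) (hy : y ∉ S.image Prod.snd) (v : V) : (v, y) ∈ (↑S : Set (V × W))ᶜ :=
    fun hvy => hy (Finset.mem_image_of_mem _ hvy)
  exact not_isAcyclic_induce_boxProd_of_rows_columns hT.connected.preconnected
    hT'.connected.preconnected hab hcd (column a ha) (column b hb) (row c hc) (row d hd) hS

theorem decycling_boxProd_trees_lower_bound
    {V W : Type*} [Fintype V] [Fintype W]
    (T : SimpleGraph V) (T' : SimpleGraph W) (n n' : ℕ)
    (hn : Fintype.card V = n) (hn' : Fintype.card W = n')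
    (h2 : 2 ≤ n) (hnn' : n ≤ n')
    (hT : T.IsTree) (hT' : T'.IsTree) :
    n - 1 ≤ decyclingNumber (T.boxProd T') :=
  decycling_boxProd_trees_lower_bound_general T T' n n' hn hn' hnn' hT hT'
end

section
/- If T and T' are trees of respective orders n and n' with n' ≥ n ≥ 2, then the set {(v_i, c) : i ∈ [n], v_i ≠ v_1} ⊆ V(T) × V(S_{n'}), where c is the center of the star S_{n'} and v_1 is any fixed vertex of T, is a decycling set of T □ S_{n'} of size n − 1; in particular the subgraph of T □ S_{n'} induced by the complement of this set is a tree. -/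
open SimpleGraph

theorem decyclingSet_tree_boxProd_star
    {V : Type*} [Fintype V]
    (T : SimpleGraph V) (n n' : ℕ)
    (hn : Fintype.card V = n) (h2 : 2 ≤ n) (hnn' : n ≤ n')
    (hT : T.IsTree)
    (c : Fin n') (hc : c.val = 0) (v₁ : V) :
    ({p : V × Fin n' | p.2 = c ∧ p.1 ≠ v₁} : Set (V × Fin n')).ncard = n - 1 ∧
    ((T.boxProd (_root_.starGraph n')).induce
      ({p : V × Fin n' | p.2 = c ∧ p.1 ≠ v₁} : Set (V × Fin n'))ᶜ).IsTree := by
  classical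
  set A : Set (V × Fin n') :=
    ({p : V × Fin n' | p.2 = c ∧ p.1 ≠ v₁} : Set (V × Fin n'))ᶜ with hA
  set H : SimpleGraph A := (T.boxProd (_root_.starGraph n')).induce A with hH
  -- basic facts
  have memA : ∀ v (j : Fin n'), (v, j) ∈ A ↔ (j = c → v = v₁) := by
    intro v j
    simp only [hA, Set.mem_compl_iff, Set.mem_setOf_eq, not_and, not_not]
  have hrmem : (v₁, c) ∈ A := (memA v₁ c).2 (fun _ => rfl)
  set r : A := ⟨(v₁, c), hrmem⟩ with hr
  have hadjI : ∀ a b : A, (T.boxProd (_root_.starGraph n')).Adj a.val b.val → H.Adj a b :=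
    fun _ _ h => h
  have hadjE : ∀ a b : A, H.Adj a b → (T.boxProd (_root_.starGraph n')).Adj a.val b.val :=
    fun _ _ h => h
  have hc' : ∀ j : Fin n', j.val = 0 → j = c := fun j hj => Fin.ext (by rw [hj, hc])
  have F0 : ∀ a : A, a.val.2 = c → a = r := by
    rintro ⟨⟨v, j⟩, ha⟩ h
    have h' : j = c := h
    have hv : v = v₁ := (memA v j).1 ha h'
    exact Subtype.ext (Prod.ext hv h')
  have F1 : ∀ a b : A, H.Adj a b →
      (T.Adj a.val.1 b.val.1 ∧ a.val.2 = b.val.2) ∨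
      (a = r ∧ b.val.1 = v₁ ∧ b.val.2 ≠ c) ∨
      (b = r ∧ a.val.1 = v₁ ∧ a.val.2 ≠ c) := by
    intro a b hab
    have hab' := hadjE a b hab
    rw [SimpleGraph.boxProd_adj] at hab'
    rcases hab' with ⟨ht, h2'⟩ | ⟨hs, h1⟩
    · exact Or.inl ⟨ht, h2'⟩
    · obtain ⟨hne, h0 | h0⟩ := hs
      · have hac : a.val.2 = c := hc' _ h0
        have har : a = r := F0 a hac
        refine Or.inr (Or.inl ⟨har, ?_, ?_⟩)
        · rw [← h1, har]
        · intro hbc; exact hne (by rw [hac, hbc])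
      · have hbc : b.val.2 = c := hc' _ h0
        have hbr : b = r := F0 b hbc
        refine Or.inr (Or.inr ⟨hbr, ?_, ?_⟩)
        · rw [h1, hbr]
        · intro hac; exact hne (by rw [hac, hbc])
  -- all vertices of a walk avoiding r lie in the same fiber
  have L1 : ∀ (x y : A) (w : H.Walk x y), r ∉ w.support →
      ∀ z ∈ w.support, z.val.2 = x.val.2 := by
    intro x y w
    induction w with
    | nil =>
      intro _ z hz
      rw [SimpleGraph.Walk.support_nil, List.mem_singleton] at hz
      rw [hz]
    | @cons x u y h w ih =>
      intro hrs z hz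
      rw [SimpleGraph.Walk.support_cons, List.mem_cons] at hrs hz
      push_neg at hrs
      rcases F1 _ _ h with ⟨_, h2'⟩ | ⟨hxr, _⟩ | ⟨hur, _⟩
      · rcases hz with rfl | hz'
        · rfl
        · rw [ih hrs.2 z hz', ← h2']
      · exact absurd hxr.symm hrs.1
      · exact absurd (hur ▸ w.start_mem_support) hrs.2
  -- projection of a walk avoiding r to a walk in T
  have L3 : ∀ (x y : A) (w : H.Walk x y), r ∉ w.support →
      ∃ w' : T.Walk x.val.1 y.val.1,
        w'.support = w.support.map (fun z => z.val.1) ∧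
        w'.edges = w.edges.map (Sym2.map (fun z => z.val.1)) := by
    intro x y w
    induction w with
    | nil => exact fun _ => ⟨SimpleGraph.Walk.nil, by simp, by simp⟩
    | @cons x u y h w ih =>
      intro hrs
      rw [SimpleGraph.Walk.support_cons, List.mem_cons] at hrs
      push_neg at hrs
      rcases F1 _ _ h with ⟨ht, _⟩ | ⟨hxr, _⟩ | ⟨hur, _⟩
      · obtain ⟨w', h1, h2'⟩ := ih hrs.2
        exact ⟨SimpleGraph.Walk.cons ht w', by simp [h1], by simp [h2']⟩
      · exact absurd hxr.symm hrs.1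
      · exact absurd (hur ▸ w.start_mem_support) hrs.2
  constructor
  · -- cardinality
    have h1 : ({p : V × Fin n' | p.2 = c ∧ p.1 ≠ v₁} : Set (V × Fin n')) =
        (fun v => (v, c)) '' ({v₁}ᶜ : Set V) := by
      ext ⟨v, j⟩
      simp only [Set.mem_setOf_eq, Set.mem_image, Set.mem_compl_iff, Set.mem_singleton_iff]
      constructor
      · rintro ⟨rfl, hv⟩; exact ⟨v, hv, rfl⟩
      · rintro ⟨w, hw, heq⟩
        obtain ⟨rfl, rfl⟩ := Prod.mk.injEq .. ▸ heq
        exact ⟨rfl, hw⟩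
    have hinj : Function.Injective (fun v : V => (v, c)) :=
      fun a b h => congrArg Prod.fst h
    rw [h1, Set.ncard_image_of_injective _ hinj]
    have h3 := Set.ncard_add_ncard_compl ({v₁} : Set V)
    rw [Set.ncard_singleton, Nat.card_eq_fintype_card, hn] at h3
    omega
  · constructor
    · -- connected
      have reach : ∀ a : A, H.Reachable r a := by
        rintro ⟨⟨v, j⟩, ha⟩
        by_cases hj : j = c
        · subst hj
          have : v = v₁ := (memA v j).1 ha rfl
          subst this
          exact SimpleGraph.Reachable.refl _
        · let fj : T →g H :=
            { toFun := fun w => ⟨(w, j), (memA w j).2 (fun h => absurd h hj)⟩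
              map_rel' := by
                intro w w' hw
                exact hadjI _ _ (Or.inl ⟨hw, rfl⟩) }
          have hstep : H.Adj r ⟨(v₁, j), (memA v₁ j).2 (fun _ => rfl)⟩ :=
            hadjI _ _ (Or.inr ⟨⟨fun h => hj h.symm, Or.inl hc⟩, rfl⟩)
          have hreach : H.Reachable ⟨(v₁, j), (memA v₁ j).2 (fun _ => rfl)⟩
              ⟨(v, j), ha⟩ :=
            SimpleGraph.Reachable.map fj (hT.isConnected.preconnected v₁ v)
          exact hstep.reachable.trans hreach
      haveI : Nonempty A := ⟨r⟩
      exact SimpleGraph.Connected.mk (fun a b => (reach a).symm.trans (reach b))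
    · -- acyclic
      intro a p hp
      by_cases hrp : r ∈ p.support
      · -- cycle through r
        obtain ⟨q, hq⟩ : ∃ q : H.Walk r r, q.IsCycle := ⟨p.rotate r hrp, hp.rotate hrp⟩
        cases q with
        | nil => exact SimpleGraph.Walk.IsCycle.not_of_nil hq
        | @cons _ b _ h tail =>
          rw [SimpleGraph.Walk.cons_isCycle_iff] at hq
          obtain ⟨hpath, hedge⟩ := hq
          have hb : b.val.1 = v₁ ∧ b.val.2 ≠ c := by
            rcases F1 _ _ h with ⟨_, h2'⟩ | ⟨_, hb1, hb2⟩ | ⟨hbr, _⟩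
            · exact absurd (F0 b h2'.symm) h.ne'
            · exact ⟨hb1, hb2⟩
            · exact absurd hbr h.ne'
          obtain ⟨d, h', s, hs⟩ := SimpleGraph.Walk.exists_eq_cons_of_ne h.ne tail.reverse
          have hd : d.val.1 = v₁ ∧ d.val.2 ≠ c := by
            rcases F1 _ _ h' with ⟨_, h2'⟩ | ⟨_, hd1, hd2⟩ | ⟨hdr, _⟩
            · exact absurd (F0 d h2'.symm) h'.ne'
            · exact ⟨hd1, hd2⟩
            · exact absurd hdr h'.ne'
          have hnd : (SimpleGraph.Walk.cons h' s).support.Nodup := by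
            rw [← hs, SimpleGraph.Walk.support_reverse]
            exact List.nodup_reverse.2 hpath.support_nodup
          rw [SimpleGraph.Walk.support_cons, List.nodup_cons] at hnd
          have hrs : r ∉ s.support := hnd.1
          have hbd : b.val.2 = d.val.2 := L1 d b s hrs b s.end_mem_support
          have hdb : d = b := Subtype.ext (Prod.ext (by rw [hd.1, hb.1]) hbd.symm)
          subst hdb
          apply hedge
          have hmem : s(r, d) ∈ tail.reverse.edges := by
            rw [hs, SimpleGraph.Walk.edges_cons]
            exact List.mem_cons_self
          rwa [SimpleGraph.Walk.edges_reverse, List.mem_reverse] at hmem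
      · -- cycle avoiding r: project to T
        have hsnd := L1 a a p hrp
        obtain ⟨w', hs', he'⟩ := L3 a a p hrp
        have hinj : ∀ z₁ ∈ p.support, ∀ z₂ ∈ p.support, z₁.val.1 = z₂.val.1 → z₁ = z₂ := by
          intro z₁ h₁ z₂ h₂ hz
          exact Subtype.ext (Prod.ext hz (by rw [hsnd z₁ h₁, hsnd z₂ h₂]))
        have hcyc := SimpleGraph.Walk.isCycle_def _ |>.1 hp
        refine hT.2 w' ?_
        rw [SimpleGraph.Walk.isCycle_def]
        refine ⟨?_, ?_, ?_⟩
        · rw [SimpleGraph.Walk.isTrail_def, he']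
          refine List.Nodup.map_on ?_ (hcyc.1.edges_nodup)
          intro e₁ he₁ e₂ he₂ heq
          induction e₁ using Sym2.ind with
          | _ u v =>
            induction e₂ using Sym2.ind with
            | _ u' v' =>
              rw [Sym2.map_pair_eq, Sym2.map_pair_eq, Sym2.eq_iff] at heq
              have hu := p.fst_mem_support_of_mem_edges he₁
              have hv := p.snd_mem_support_of_mem_edges he₁
              have hu' := p.fst_mem_support_of_mem_edges he₂
              have hv' := p.snd_mem_support_of_mem_edges he₂
              rcases heq with ⟨hh1, hh2⟩ | ⟨hh1, hh2⟩
              · rw [hinj u hu u' hu' hh1, hinj v hv v' hv' hh2]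
              · rw [hinj u hu v' hv' hh1, hinj v hv u' hu' hh2, Sym2.eq_swap]
        · intro hnil
          rw [hnil, SimpleGraph.Walk.support_nil] at hs'
          have hlen := congrArg List.length hs'
          rw [List.length_singleton, List.length_map, SimpleGraph.Walk.length_support] at hlen
          have := hp.three_le_length
          omega
        · rw [hs', ← List.map_tail]
          refine List.Nodup.map_on ?_ hcyc.2.2
          intro z₁ h₁ z₂ h₂ hz
          exact hinj z₁ (List.tail_subset _ h₁) z₂ (List.tail_subset _ h₂) hz
end

section
/- If T and T' are trees of respective orders n and n' with n' ≥ n ≥ 2, then the forest number satisfies f(T □ T') ≤ f(S_n □ S_{n'}). -/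
open SimpleGraph

/-!
An induced forest of `T □ T'` misses at least `n - 1` vertices: if at most `n - 2` are
deleted, two full rows and two full columns survive, and as `T` and `T'` are connected they close
up into a cycle. In `S_n □ S_{n'}` the bound is attained: deleting the `n - 1` vertices `(i, 0)`,
`i ≠ 0`, leaves a tree, the column `{0} × S_{n'}` with a copy of `S_n` centred at each leaf.
-/

namespace SimpleGraph

theorem isAcyclic_of_unique_lower_neighbor {α : Type*} {G : SimpleGraph α} (rank : α → ℕ)
    (hne : ∀ ⦃v w⦄, G.Adj v w → rank v ≠ rank w)
    (hlower : ∀ ⦃v w w'⦄, G.Adj v w → G.Adj v w' → rank w < rank v → rank w' < rank v →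
      w = w') :
    G.IsAcyclic := by
  classical
  intro v c hc
  obtain ⟨u, hu, hmax⟩ := c.support.toFinset.exists_max_image rank ⟨v, by simp⟩
  rw [List.mem_toFinset] at hu
  -- On the cycle rotated to start at a vertex `u` of maximal rank, both neighbours of `u`
  -- have smaller rank, so they coincide.
  set c' := c.rotate u hu
  have hc' : c'.IsCycle := hc.rotate hu
  have lt_of_mem {x} (hx : x ∈ c'.support) (hadj : G.Adj u x) : rank x < rank u :=
    lt_of_le_of_ne (hmax x (by simpa [c', Walk.mem_support_rotate_iff] using hx)) (hne hadj).symm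
  have hsnd := c'.adj_snd hc'.not_nil
  have hpen := (c'.adj_penultimate hc'.not_nil).symm
  exact hc'.snd_ne_penultimate <| hlower hsnd hpen
    (lt_of_mem (c'.getVert_mem_support _) hsnd) (lt_of_mem (c'.getVert_mem_support _) hpen)

theorem IsAcyclic.mem_edges_of_induce {α : Type*} {G : SimpleGraph α} {S : Set α}
    (h : (G.induce S).IsAcyclic) {v w : α} (hv : v ∈ S) (hw : w ∈ S) (hadj : G.Adj v w)
    (p : G.Walk v w) (hp : ∀ x ∈ p.support, x ∈ S) : s(v, w) ∈ p.edges := by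
  have hbridge := isAcyclic_iff_forall_adj_isBridge.mp h (v := ⟨v, hv⟩) (w := ⟨w, hw⟩) hadj
  have := List.mem_map_of_mem (f := Sym2.map (Embedding.induce (G := G) S).toHom)
    (isBridge_iff_forall_walk_mem_edges.mp hbridge (p.induce S hp))
  rwa [← Walk.edges_map, Walk.map_induce] at this

namespace Walk

variable {V W : Type*} {G : SimpleGraph V} (H : SimpleGraph W)

@[simp]
theorem mem_support_boxProdLeft {a₁ a₂ : V} (b : W) (p : G.Walk a₁ a₂) {x : V × W} :
    x ∈ (p.boxProdLeft H b).support ↔ x.1 ∈ p.support ∧ x.2 = b := by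
  rw [show (p.boxProdLeft H b).support = p.support.map (·, b) from support_map _ _]
  obtain ⟨x₁, x₂⟩ := x
  simp [eq_comm]

@[simp]
theorem mem_support_boxProdRight {b₁ b₂ : W} (a : V) (p : H.Walk b₁ b₂) {x : V × W} :
    x ∈ (p.boxProdRight G a).support ↔ x.1 = a ∧ x.2 ∈ p.support := by
  rw [show (p.boxProdRight G a).support = p.support.map (a, ·) from support_map _ _]
  obtain ⟨x₁, x₂⟩ := x
  simp [eq_comm, and_comm]

end Walk

theorem not_isAcyclic_induce_boxProd {V W : Type*} {G : SimpleGraph V} {H : SimpleGraph W}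
    (hG : G.Preconnected) (hH : H.Preconnected) {u u' : V} {b b' : W} (hu : u ≠ u') (hb : b ≠ b')
    {S : Set (V × W)} (hS : ∀ p : V × W, p.1 = u ∨ p.1 = u' ∨ p.2 = b ∨ p.2 = b' → p ∈ S) :
    ¬((G.boxProd H).induce S).IsAcyclic := by
  intro hS_acyclic
  obtain ⟨P⟩ := hG u u'
  obtain ⟨Q, hQ⟩ := (hH b b').exists_isPath
  cases Q with
  | nil => exact hb rfl
  | @cons _ y _ hby Q =>
  have hb_notMem : b ∉ Q.support := ((Walk.cons_isPath_iff hby Q).mp hQ).2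
  -- Around the rectangle: row `b`, column `u'`, row `b'`, and back down column `u` to
  -- `(u, y)`, never using the edge from `(u, y)` to `(u, b)`.
  let C : (G.boxProd H).Walk (u, b) (u, y) :=
    (P.boxProdLeft H b).append <| ((Walk.cons hby Q).boxProdRight G u').append <|
      (P.reverse.boxProdLeft H b').append (Q.reverse.boxProdRight G u)
  have hC := hS_acyclic.mem_edges_of_induce (hS _ (by simp)) (hS _ (by simp))
    (boxProd_adj_right.mpr hby) C (fun x hx => hS x (by
      simp only [C, Walk.mem_support_append_iff, Walk.mem_support_boxProdLeft,
        Walk.mem_support_boxProdRight] at hx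
      tauto))
  simp only [C, Walk.edges_append, List.mem_append] at hC
  rcases hC with h | h | h | h
  · exact hby.ne
      ((Walk.mem_support_boxProdLeft ..).mp (Walk.snd_mem_support_of_mem_edges _ h)).2.symm
  · exact hu ((Walk.mem_support_boxProdRight ..).mp (Walk.fst_mem_support_of_mem_edges _ h)).1
  · exact hb ((Walk.mem_support_boxProdLeft ..).mp (Walk.fst_mem_support_of_mem_edges _ h)).2
  · have := ((Walk.mem_support_boxProdRight ..).mp (Walk.fst_mem_support_of_mem_edges _ h)).2
    rw [Walk.support_reverse, List.mem_reverse] at this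
    exact hb_notMem this

end SimpleGraph

open Finset

theorem Finset.exists_ne_notMem_image {α β : Type*} [Fintype β] [DecidableEq β] (s : Finset α)
    (f : α → β) (h : #s + 2 ≤ Fintype.card β) :
    ∃ b b', b ≠ b' ∧ b ∉ s.image f ∧ b' ∉ s.image f := by
  have : 1 < #(s.image f)ᶜ := by
    rw [card_compl]
    have := s.card_image_le (f := f)
    omega
  obtain ⟨b, hb, b', hb', hne⟩ := one_lt_card.mp this
  exact ⟨b, b', hne, mem_compl.mp hb, mem_compl.mp hb'⟩

section forestNumber

variable {V : Type*} [Fintype V] {G : SimpleGraph V}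

theorem forestNumber_le {k : ℕ} (h : ∀ S : Finset V, (G.induce ↑S).IsAcyclic → #S ≤ k) :
    forestNumber G ≤ k :=
  csSup_le' <| by
    rintro _ ⟨S, rfl, hS⟩
    exact h S hS

theorem card_le_forestNumber {S : Finset V} (hS : (G.induce ↑S).IsAcyclic) :
    #S ≤ forestNumber G :=
  le_csSup ⟨Fintype.card V, by rintro _ ⟨S, rfl, -⟩; exact S.card_le_univ⟩ ⟨S, rfl, hS⟩

end forestNumber

/-- At most `|V| - 2` vertices outside `S` would leave two full rows and two full columns in `S`. -/
theorem card_le_of_isAcyclic_induce_boxProd {V W : Type*} [Fintype V] [Fintype W]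
    {G : SimpleGraph V} {H : SimpleGraph W} (hG : G.Preconnected) (hH : H.Preconnected)
    (hVW : Fintype.card V ≤ Fintype.card W) {S : Finset (V × W)}
    (hS : ((G.boxProd H).induce ↑S).IsAcyclic) :
    #S ≤ Fintype.card V * Fintype.card W - (Fintype.card V - 1) := by
  classical
  by_contra! h
  have hcompl : #Sᶜ + 2 ≤ Fintype.card V := by
    have := S.card_add_card_compl
    rw [Fintype.card_prod] at this
    omega
  obtain ⟨u, u', hu, hu_notMem, hu'_notMem⟩ := Sᶜ.exists_ne_notMem_image Prod.fst hcompl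
  obtain ⟨b, b', hb, hb_notMem, hb'_notMem⟩ :=
    Sᶜ.exists_ne_notMem_image Prod.snd (hcompl.trans hVW)
  refine not_isAcyclic_induce_boxProd hG hH hu hb (fun p hp => ?_) hS
  by_contra hpS
  have hp_compl : p ∈ Sᶜ := mem_compl.mpr hpS
  rcases hp with h | h | h | h
  · exact hu_notMem (h ▸ mem_image_of_mem Prod.fst hp_compl)
  · exact hu'_notMem (h ▸ mem_image_of_mem Prod.fst hp_compl)
  · exact hb_notMem (h ▸ mem_image_of_mem Prod.snd hp_compl)
  · exact hb'_notMem (h ▸ mem_image_of_mem Prod.snd hp_compl)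

/-- `(0, 0)` has rank `0`, the rest of column `0` rank `1`, and every other vertex rank `2`;
the only lower neighbour left to `(i, j)` is `(0, 0)` if `i = 0`, and `(0, j)` otherwise. -/
theorem isAcyclic_starGraph_boxProd_induce (n n' : ℕ) :
    (((_root_.starGraph n).boxProd (_root_.starGraph n')).induce
      {p : Fin n × Fin n' | p.1.val = 0 ∨ p.2.val ≠ 0}).IsAcyclic := by
  refine isAcyclic_of_unique_lower_neighbor (fun p => min p.1.1.val 1 + min p.1.2.val 1) ?_ ?_
  · rintro ⟨⟨i, j⟩, _⟩ ⟨⟨i', j'⟩, _⟩ h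
    simp only [comap_adj, Function.Embedding.subtype_apply, boxProd_adj, _root_.starGraph, ne_eq,
      Fin.ext_iff] at h ⊢
    omega
  · rintro ⟨⟨i, j⟩, hv⟩ ⟨⟨i', j'⟩, hw⟩ ⟨⟨i'', j''⟩, hw'⟩ h h'
    simp only [Set.mem_ofPred_eq, comap_adj, Function.Embedding.subtype_apply, boxProd_adj,
      _root_.starGraph, ne_eq, Subtype.mk.injEq, Prod.mk.injEq, Fin.ext_iff] at hv hw hw' h h' ⊢
    omega

theorem le_forestNumber_starGraph_boxProd (n n' : ℕ) :
    n * n' - (n - 1) ≤ forestNumber ((_root_.starGraph n).boxProd (_root_.starGraph n')) := by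
  rcases Nat.eq_zero_or_pos n' with rfl | hn'
  · simp
  let F : Finset (Fin n × Fin n') := {p | p.1.val = 0 ∨ p.2.val ≠ 0}
  have hF_card : #F + (n - 1) = n * n' := by
    have hcompl :
        Fᶜ = ({i | ¬i.val < 1} : Finset (Fin n)) ×ˢ ({j | j.val < 1} : Finset (Fin n')) := by
      ext p
      simp [F]
    have := F.card_add_card_compl
    rw [hcompl, card_product, filter_not, card_univ_sdiff, Fin.card_filter_val_lt,
      Fin.card_filter_val_lt, min_eq_right (show 1 ≤ n' from hn'), mul_one, Fintype.card_prod,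
      Fintype.card_fin, Fintype.card_fin] at this
    omega
  have hF_forest : #F ≤ forestNumber ((_root_.starGraph n).boxProd (_root_.starGraph n')) :=
    card_le_forestNumber (by rw [coe_filter_univ]; exact isAcyclic_starGraph_boxProd_induce n n')
  omega

theorem forest_boxProd_trees_le_stars_general
    {V W : Type*} [Fintype V] [Fintype W]
    (T : SimpleGraph V) (T' : SimpleGraph W) (n n' : ℕ)
    (hn : Fintype.card V = n) (hn' : Fintype.card W = n')
    (hnn' : n ≤ n')
    (hT : T.IsTree) (hT' : T'.IsTree) :
    forestNumber (T.boxProd T') ≤ forestNumber ((_root_.starGraph n).boxProd (_root_.starGraph n')) := by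
  subst hn hn'
  refine (forestNumber_le fun S hS => ?_).trans (le_forestNumber_starGraph_boxProd _ _)
  exact card_le_of_isAcyclic_induce_boxProd hT.connected.preconnected hT'.connected.preconnected
    hnn' hS

theorem forest_boxProd_trees_le_stars
    {V W : Type*} [Fintype V] [Fintype W]
    (T : SimpleGraph V) (T' : SimpleGraph W) (n n' : ℕ)
    (hn : Fintype.card V = n) (hn' : Fintype.card W = n')
    (h2 : 2 ≤ n) (hnn' : n ≤ n')
    (hT : T.IsTree) (hT' : T'.IsTree) :
    forestNumber (T.boxProd T') ≤ forestNumber ((_root_.starGraph n).boxProd (_root_.starGraph n')) :=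
  forest_boxProd_trees_le_stars_general T T' n n' hn hn' hnn' hT hT'
end

section
/- If T is a nontrivial tree (order at least 2) and n' ≥ |V(T)| is an integer, then the forest number of the Cartesian product of T with the star S_{n'} satisfies f(T □ S_{n'}) = |V(T)|·n' − |V(T)| + 1. -/
open SimpleGraph

namespace ForestAux

lemma isPath_concat {G : SimpleGraph α} {u v w : α} {p : G.Walk u v} (hp : p.IsPath)
    (h : G.Adj v w) (hw : w ∉ p.support) : (p.concat h).IsPath := by
  rw [← Walk.isPath_reverse_iff, Walk.reverse_concat]
  exact (hp.reverse).cons (by simpa [Walk.support_reverse] using hw)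

lemma isAcyclic_of_hom {β : Type*} {G : SimpleGraph α} {H : SimpleGraph β} (f : G →g H)
    (hf : Function.Injective f) (hH : H.IsAcyclic) : G.IsAcyclic :=
  fun _ c hc => hH (c.map f) ((Walk.map_isCycle_iff_of_injective hf).mpr hc)

lemma acyclic_of_rank (G : SimpleGraph α) (rk : α → ℕ)
    (hne : ∀ ⦃u v⦄, G.Adj u v → rk u ≠ rk v)
    (huniq : ∀ ⦃x a b⦄, G.Adj x a → G.Adj x b → rk a < rk x → rk b < rk x → a = b) :
    G.IsAcyclic := by
  classical
  have aux : ∀ (u : α) (c : G.Walk u u), c.IsCycle → (∀ x ∈ c.support, rk x ≤ rk u) → False := by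
    intro u c hc hmax
    cases c with
    | nil => exact hc.ne_nil rfl
    | @cons _ w _ h p =>
      have h3 : 3 ≤ (Walk.cons h p).length := hc.three_le_length
      rw [Walk.length_cons] at h3
      cases h_eq : (Walk.cons h p).reverse with
      | nil =>
        have := congrArg Walk.length h_eq
        simp [Walk.length_reverse] at this
      | @cons _ w' _ h' q =>
        have hw : rk w < rk u := by
          have hmem : w ∈ (Walk.cons h p).support := by
            rw [Walk.support_cons]; exact List.mem_cons_of_mem _ p.start_mem_support
          exact lt_of_le_of_ne (hmax w hmem) (hne h.symm)
        have hw' : rk w' < rk u := by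
          have hmem : w' ∈ (Walk.cons h p).support := by
            have : w' ∈ (Walk.cons h' q).support := by
              rw [Walk.support_cons]; exact List.mem_cons_of_mem _ q.start_mem_support
            rw [← h_eq, Walk.support_reverse, List.mem_reverse] at this
            exact this
          exact lt_of_le_of_ne (hmax w' hmem) (hne h'.symm)
        have hww : w = w' := huniq h h' hw hw'
        subst hww
        -- derive edge duplication
        have hedges : p.edges.reverse ++ [s(u, w)] = s(u, w) :: q.edges := by
          have := congrArg Walk.edges h_eq
          rw [Walk.edges_reverse, Walk.edges_cons, Walk.edges_cons, List.reverse_cons] at this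
          exact this
        cases hl : p.edges.reverse with
        | nil =>
          have : p.edges = [] := by simpa using congrArg List.reverse hl
          have := congrArg List.length this
          rw [Walk.length_edges] at this
          simp only [List.length_nil] at this; omega
        | cons y l' =>
          rw [hl, List.cons_append] at hedges
          have hy : y = s(u, w) := (List.cons.injEq _ _ _ _).mp hedges |>.1
          have hyin : s(u, w) ∈ p.edges := by
            rw [← hy]
            have : y ∈ p.edges.reverse := by rw [hl]; exact List.mem_cons_self
            rwa [List.mem_reverse] at this
          have hnodup := hc.isTrail.edges_nodup
          rw [Walk.edges_cons, List.nodup_cons] at hnodup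
          exact hnodup.1 hyin
  intro v c₀ hc₀
  obtain ⟨u, hu, hmax⟩ := c₀.support.toFinset.exists_max_image rk ⟨v, by simp⟩
  rw [List.mem_toFinset] at hu
  refine aux u (c₀.rotate u hu) (hc₀.rotate hu) ?_
  intro x hx
  apply hmax
  rw [List.mem_toFinset]
  rcases (Walk.mem_support_iff _).mp hx with h | h
  · subst h; exact hu
  · exact (Walk.mem_support_iff _).mpr (Or.inr ((Walk.support_rotate c₀ u hu).mem_iff.mp h))


lemma tree_path_length {T : SimpleGraph α} (hT : T.IsTree) {u v : α} (p : T.Walk u v)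
    (hp : p.IsPath) : p.length = T.dist u v := by
  classical
  obtain ⟨q, hq⟩ := (hT.isConnected.preconnected u v).exists_walk_length_eq_dist
  have h1 : T.dist u v ≤ p.length := SimpleGraph.dist_le p
  have h2 : (⟨p, hp⟩ : T.Path u v) = ⟨q.bypass, q.bypass_isPath⟩ := hT.2.path_unique _ _
  have h3 : p = q.bypass := Subtype.mk_eq_mk.mp h2
  have h4 : q.bypass.length ≤ q.length := q.length_bypass_le
  have h5 : p.length = q.bypass.length := by rw [h3]
  omega

/-- In the tree, there is a path from r to u of length `dist r u`. -/
lemma tree_exists_path {T : SimpleGraph α} (hT : T.IsTree) (r u : α) :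
    ∃ p : T.Walk r u, p.IsPath ∧ p.length = T.dist r u := by
  classical
  obtain ⟨q, hq⟩ := (hT.isConnected.preconnected r u).exists_walk_length_eq_dist
  exact ⟨q.bypass, q.bypass_isPath, tree_path_length hT _ q.bypass_isPath⟩

lemma tree_adj_dist_ne {T : SimpleGraph α} (hT : T.IsTree) (r : α) {u v : α} (h : T.Adj u v) :
    T.dist r u ≠ T.dist r v := by
  classical
  intro heq
  obtain ⟨P, hP, hlen⟩ := tree_exists_path hT r u
  by_cases hv : v ∈ P.support
  · have hQ : (P.takeUntil v hv).length = T.dist r v := tree_path_length hT _ (hP.takeUntil hv)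
    have hsp := congrArg Walk.length (P.take_spec hv)
    rw [Walk.length_append] at hsp
    have hdrop : (P.dropUntil v hv).length = 0 := by omega
    have hvu : v = u := Walk.eq_of_length_eq_zero hdrop
    subst hvu
    exact T.loopless.irrefl v h.symm
  · have hQp : (P.concat h).IsPath := isPath_concat hP h hv
    have hQ : (P.concat h).length = T.dist r v := tree_path_length hT _ hQp
    rw [Walk.length_concat] at hQ
    omega

lemma tree_unique_parent {T : SimpleGraph α} (hT : T.IsTree) (r : α) {v w₁ w₂ : α}
    (h₁ : T.Adj v w₁) (h₂ : T.Adj v w₂)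
    (hd₁ : T.dist r w₁ < T.dist r v) (hd₂ : T.dist r w₂ < T.dist r v) : w₁ = w₂ := by
  classical
  obtain ⟨P₁, hP₁, hl₁⟩ := tree_exists_path hT r w₁
  obtain ⟨P₂, hP₂, hl₂⟩ := tree_exists_path hT r w₂
  have hv₁ : v ∉ P₁.support := by
    intro hv
    have hQ : (P₁.takeUntil v hv).length = T.dist r v := tree_path_length hT _ (hP₁.takeUntil hv)
    have := P₁.length_takeUntil_le hv
    omega
  have hv₂ : v ∉ P₂.support := by
    intro hv
    have hQ : (P₂.takeUntil v hv).length = T.dist r v := tree_path_length hT _ (hP₂.takeUntil hv)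
    have := P₂.length_takeUntil_le hv
    omega
  have hQ₁ : (P₁.concat h₁.symm).IsPath := isPath_concat hP₁ h₁.symm hv₁
  have hQ₂ : (P₂.concat h₂.symm).IsPath := isPath_concat hP₂ h₂.symm hv₂
  have heq : (⟨P₁.concat h₁.symm, hQ₁⟩ : T.Path r v) = ⟨P₂.concat h₂.symm, hQ₂⟩ :=
    hT.2.path_unique _ _
  have heq' : P₁.concat h₁.symm = P₂.concat h₂.symm := Subtype.mk_eq_mk.mp heq
  have := congrArg (fun q : T.Walk r v => q.reverse.getVert 1) heq'
  simpa [Walk.reverse_concat, Walk.getVert_cons_succ, Walk.getVert_zero] using this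

lemma layer_path {V : Type*} (T : SimpleGraph V) {n' : ℕ} (hT : T.IsTree)
    (S : Finset (V × Fin n')) {z j : Fin n'} (hzval : z.val = 0) (hj : j ≠ z)
    {u v : V} (huv : u ≠ v) (hlayer : ∀ w : V, (w, j) ∈ S)
    (hu : (u, z) ∈ S) (hv : (v, z) ∈ S) :
    ∃ P : ((T.boxProd (_root_.starGraph n')).induce (↑S : Set (V × Fin n'))).Walk
        ⟨(u, z), Finset.mem_coe.mpr hu⟩ ⟨(v, z), Finset.mem_coe.mpr hv⟩,
      P.IsPath ∧ (∀ x ∈ P.support, (x : V × Fin n').2 = z ∨ (x : V × Fin n').2 = j) ∧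
        (⟨(u, j), Finset.mem_coe.mpr (hlayer u)⟩ :
          ↥(↑S : Set (V × Fin n'))) ∈ P.support := by
  classical
  have hzj : z ≠ j := fun h => hj h.symm
  let g : V → ↥(↑S : Set (V × Fin n')) := fun w => ⟨(w, j), Finset.mem_coe.mpr (hlayer w)⟩
  have hgadj : ∀ a b : V, T.Adj a b →
      ((T.boxProd (_root_.starGraph n')).induce (↑S : Set (V × Fin n'))).Adj (g a) (g b) := by
    intro a b hab
    show (T.boxProd (_root_.starGraph n')).Adj (a, j) (b, j)
    rw [boxProd_adj]
    exact Or.inl ⟨hab, rfl⟩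
  let f : T →g ((T.boxProd (_root_.starGraph n')).induce (↑S : Set (V × Fin n'))) :=
    ⟨g, fun {a b} hab => hgadj a b hab⟩
  have finj : Function.Injective f := by
    intro a b hab
    exact congrArg (fun x : ↥(↑S : Set (V × Fin n')) => (x : V × Fin n').1) hab
  obtain ⟨W⟩ := hT.isConnected.preconnected u v
  have hpp : W.bypass.IsPath := W.bypass_isPath
  have hMp : (W.bypass.map f).IsPath := Walk.map_isPath_of_injective finj hpp
  have hMsupp : ∀ x ∈ (W.bypass.map f).support, (x : V × Fin n').2 = j := by
    intro x hx
    rw [Walk.support_map] at hx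
    obtain ⟨w, _, rfl⟩ := List.mem_map.mp hx
    rfl
  have h₁ : ((T.boxProd (_root_.starGraph n')).induce (↑S : Set (V × Fin n'))).Adj
      ⟨(u, z), Finset.mem_coe.mpr hu⟩ (g u) := by
    show (T.boxProd (_root_.starGraph n')).Adj (u, z) (u, j)
    rw [boxProd_adj]
    exact Or.inr ⟨⟨hzj, Or.inl hzval⟩, rfl⟩
  have h₂ : ((T.boxProd (_root_.starGraph n')).induce (↑S : Set (V × Fin n'))).Adj
      (g v) ⟨(v, z), Finset.mem_coe.mpr hv⟩ := by
    show (T.boxProd (_root_.starGraph n')).Adj (v, j) (v, z)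
    rw [boxProd_adj]
    exact Or.inr ⟨⟨hj, Or.inr hzval⟩, rfl⟩
  have hvz_notin : (⟨(v, z), Finset.mem_coe.mpr hv⟩ : ↥(↑S : Set (V × Fin n')))
      ∉ (W.bypass.map f).support := fun hmem => hzj (hMsupp _ hmem)
  have hQp : ((W.bypass.map f).concat h₂).IsPath := isPath_concat hMp h₂ hvz_notin
  have huz_notin : (⟨(u, z), Finset.mem_coe.mpr hu⟩ : ↥(↑S : Set (V × Fin n')))
      ∉ ((W.bypass.map f).concat h₂).support := by
    rw [Walk.support_concat]
    intro hmem
    rcases List.mem_append.mp hmem with hmem | hmem'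
    · exact hzj (hMsupp _ hmem)
    · have : ((u, z) : V × Fin n') = (v, z) := congrArg Subtype.val (List.mem_singleton.mp hmem')
      exact huv (congrArg Prod.fst this)
  refine ⟨Walk.cons h₁ ((W.bypass.map f).concat h₂), hQp.cons huz_notin, ?_, ?_⟩
  · intro x hx
    rw [Walk.support_cons] at hx
    rcases List.mem_cons.mp hx with rfl | hx
    · exact Or.inl rfl
    · rw [Walk.support_concat] at hx
      rcases List.mem_append.mp hx with hx | hx
      · exact Or.inr (hMsupp _ hx)
      · rw [List.mem_singleton] at hx
        subst hx
        exact Or.inl rfl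
  · rw [Walk.support_cons]
    refine List.mem_cons_of_mem _ ?_
    rw [Walk.support_concat]
    refine List.mem_append.mpr (Or.inl ?_)
    show g u ∈ (W.bypass.map f).support
    rw [Walk.support_map]
    exact List.mem_map.mpr ⟨u, W.bypass.start_mem_support, rfl⟩



lemma lower_bound {V : Type*} [Fintype V] (T : SimpleGraph V) (n' : ℕ)
    (h2 : 2 ≤ Fintype.card V) (hnn' : Fintype.card V ≤ n') (hT : T.IsTree) :
    ∃ S : Finset (V × Fin n'), S.card = Fintype.card V * n' - Fintype.card V + 1 ∧
      ((T.boxProd (_root_.starGraph n')).induce (↑S : Set (V × Fin n'))).IsAcyclic := by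
  classical
  set n := Fintype.card V with hn
  have hn'2 : 2 ≤ n' := le_trans h2 hnn'
  set z : Fin n' := ⟨0, by omega⟩ with hz
  have hzval : (z : Fin n').val = 0 := rfl
  have hvz : ∀ j : Fin n', j.val = 0 ↔ j = z := by
    intro j; constructor
    · intro h; exact Fin.ext h
    · intro h; subst h; rfl
  obtain ⟨r⟩ : Nonempty V := Fintype.card_pos_iff.mp (by omega)
  set S : Finset (V × Fin n') := Finset.univ.filter (fun p => p.2 = z → p.1 = r) with hS
  refine ⟨S, ?_, ?_⟩
  · -- cardinality
    have hsplit := Finset.card_filter_add_card_filter_not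
      (s := (Finset.univ : Finset (V × Fin n'))) (fun p => p.2 = z → p.1 = r)
    have hneg : Finset.univ.filter (fun p : V × Fin n' => ¬(p.2 = z → p.1 = r)) =
        (Finset.univ.filter (· ≠ r)).image (fun v => (v, z)) := by
      ext ⟨a, b⟩
      simp only [Finset.mem_filter, Finset.mem_univ, true_and, Finset.mem_image,
        Classical.not_imp]
      constructor
      · rintro ⟨hb, ha⟩; exact ⟨a, ha, by rw [hb]⟩
      · rintro ⟨v, hv, heq⟩
        obtain ⟨rfl, rfl⟩ := Prod.mk.injEq .. ▸ heq
        exact ⟨rfl, hv⟩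
    have hcardneg : (Finset.univ.filter (fun p : V × Fin n' => ¬(p.2 = z → p.1 = r))).card
        = n - 1 := by
      rw [hneg, Finset.card_image_of_injective _ (fun a b h => (Prod.mk.injEq ..).mp h |>.1)]
      rw [Finset.filter_ne', Finset.card_erase_of_mem (Finset.mem_univ r), Finset.card_univ]
    have hcarduniv : (Finset.univ : Finset (V × Fin n')).card = n * n' := by
      rw [Finset.card_univ, Fintype.card_prod, Fintype.card_fin]
    have hmul : n ≤ n * n' := by
      have := Nat.mul_le_mul_left n (show 1 ≤ n' by omega)
      simpa using this
    have h2' : 2 ≤ n := h2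
    rw [hcardneg, hcarduniv, ← hS] at hsplit
    omega
  · -- acyclicity
    set F : SimpleGraph (V × Fin n') :=
      { Adj := fun p q => (p.2 = q.2 ∧ p.2 ≠ z ∧ T.Adj p.1 q.1) ∨
          (p.1 = q.1 ∧ p.1 = r ∧ (_root_.starGraph n').Adj p.2 q.2)
        symm := by
          constructor
          rintro p q (⟨h1, h2, h3⟩ | ⟨h1, h2, h3⟩)
          · exact Or.inl ⟨h1.symm, h1 ▸ h2, h3.symm⟩
          · exact Or.inr ⟨h1.symm, h1 ▸ h2, h3.symm⟩
        loopless := by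
          constructor
          rintro p (⟨_, _, h3⟩ | ⟨_, _, h3⟩)
          · exact T.loopless.irrefl _ h3
          · exact (_root_.starGraph n').loopless.irrefl _ h3 } with hF
    have hFacyclic : F.IsAcyclic := by
      apply acyclic_of_rank F (fun p => if p.2 = z then 0 else 1 + 2 * T.dist r p.1)
      · rintro p q (⟨h1, hne, h3⟩ | ⟨h1, h2, h3, h4⟩)
        · rw [if_neg hne, if_neg (h1 ▸ hne)]
          have := tree_adj_dist_ne hT r h3
          omega
        · -- star edge: one of p.2 q.2 is z, other not
          rcases h4 with hp | hq
          · rw [hvz] at hp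
            rw [if_pos hp, if_neg (fun hc => h3 (hp.trans hc.symm))]
            omega
          · rw [hvz] at hq
            rw [if_neg (fun hc => h3 (hc.trans hq.symm)), if_pos hq]
            omega
      · rintro x a b hxa hxb hra hrb
        by_cases hx : x.2 = z
        · rw [if_pos hx] at hra; omega
        · rw [if_neg hx] at hra hrb
          -- characterize neighbors
          have key : ∀ c : V × Fin n', F.Adj x c →
              (if c.2 = z then 0 else 1 + 2 * T.dist r c.1) < 1 + 2 * T.dist r x.1 →
              (c = (r, z) ∧ x.1 = r) ∨ (c.2 = x.2 ∧ T.Adj x.1 c.1 ∧ T.dist r c.1 < T.dist r x.1) := by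
            rintro c (⟨h1, hne2, h3⟩ | ⟨h1, h2, h3, h4⟩) hlt
            · right
              refine ⟨h1.symm, h3, ?_⟩
              rw [if_neg (h1 ▸ hne2)] at hlt
              omega
            · left
              rcases h4 with hp | hq
              · rw [hvz] at hp; exact absurd hp hx
              · rw [hvz] at hq
                have hc1 : c.1 = r := by rw [← h1]; exact h2
                exact ⟨Prod.ext hc1 hq, h2⟩
          rcases key a hxa hra with ⟨rfl, hxr⟩ | ⟨ha2, haadj, halt⟩ <;>
            rcases key b hxb hrb with hb | ⟨hb2, hbadj, hblt⟩
          · rw [hb.1]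
          · -- a = (r,z) with x.1 = r, b layer neighbor: dist r b.1 < dist r r = 0, impossible
            rw [hxr] at hblt
            simp [SimpleGraph.dist_self] at hblt
          · rw [hb.2] at halt
            simp [SimpleGraph.dist_self] at halt
          · have := tree_unique_parent hT r haadj hbadj halt hblt
            exact Prod.ext this (ha2.trans hb2.symm)
    refine isAcyclic_of_hom ⟨Subtype.val, ?_⟩ Subtype.val_injective hFacyclic
    rintro ⟨a, haS⟩ ⟨b, hbS⟩ hab
    have hadj : (T.boxProd (_root_.starGraph n')).Adj a b := hab
    rw [Finset.mem_coe, hS, Finset.mem_filter] at haS hbS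
    rw [boxProd_adj] at hadj
    rcases hadj with ⟨hTadj, heq⟩ | ⟨hstar, heq⟩
    · -- layer edge
      left
      refine ⟨heq, ?_, hTadj⟩
      intro haz
      have har := haS.2 haz
      have hbr := hbS.2 (heq ▸ haz)
      rw [har, hbr] at hTadj
      exact T.loopless.irrefl _ hTadj
    · right
      refine ⟨heq, ?_, hstar⟩
      rcases hstar.2 with ha0 | hb0
      · rw [hvz] at ha0
        exact haS.2 ha0
      · rw [hvz] at hb0
        rw [heq]
        exact hbS.2 hb0

lemma upper_bound {V : Type*} [Fintype V] (T : SimpleGraph V) (n' : ℕ)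
    (h2 : 2 ≤ Fintype.card V) (hnn' : Fintype.card V ≤ n') (hT : T.IsTree)
    (S : Finset (V × Fin n'))
    (hAc : ((T.boxProd (_root_.starGraph n')).induce (↑S : Set (V × Fin n'))).IsAcyclic) :
    S.card ≤ Fintype.card V * n' - Fintype.card V + 1 := by
  classical
  by_contra hcon
  push_neg at hcon
  obtain ⟨n, hn⟩ : ∃ m, m = Fintype.card V := ⟨_, rfl⟩
  rw [← hn] at hcon hnn'
  have h2' : 2 ≤ n := by rw [hn]; exact h2
  have hn'2 : 2 ≤ n' := le_trans h2' hnn'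
  set z : Fin n' := ⟨0, by omega⟩ with hz
  have hzval : (z : Fin n').val = 0 := rfl
  have hvz : ∀ i : Fin n', i.val = 0 ↔ i = z := by
    intro i; exact ⟨fun h => Fin.ext h, fun h => h ▸ rfl⟩
  set R : Finset (V × Fin n') := Finset.univ \ S with hR
  have hcarduniv : (Finset.univ : Finset (V × Fin n')).card = n * n' := by
    rw [hn, Finset.card_univ, Fintype.card_prod, Fintype.card_fin]
  have hRcard : R.card = n * n' - S.card := by
    rw [hR, Finset.card_sdiff_of_subset (Finset.subset_univ S), hcarduniv]
  have hScard : S.card ≤ n * n' := by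
    rw [← hcarduniv]; exact Finset.card_le_card (Finset.subset_univ S)
  have hmul : n ≤ n * n' := by
    have := Nat.mul_le_mul_left n (show 1 ≤ n' by omega)
    simpa using this
  set A : Finset V := Finset.univ.filter (fun v => (v, z) ∈ S) with hA
  set L : Finset (Fin n') := Finset.univ.filter (fun i => i ≠ z ∧ ∀ w, (w, i) ∈ S) with hL
  set c0 := (R.filter (fun p => p.2 = z)).card with hc0
  set c1 := (R.filter (fun p => ¬ p.2 = z)).card with hc1
  have hsplitR : c0 + c1 = R.card := Finset.card_filter_add_card_filter_not _
  -- center layer bound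
  have hlayer0 : n - A.card ≤ c0 := by
    have hBA := Finset.card_filter_add_card_filter_not
      (s := (Finset.univ : Finset V)) (fun v => (v, z) ∈ S)
    rw [Finset.card_univ, ← hn, ← hA] at hBA
    have hinj : (Finset.univ.filter (fun v : V => ¬ (v, z) ∈ S)).card ≤ c0 := by
      apply Finset.card_le_card_of_injOn (fun v => (v, z))
      · intro v hv
        rw [Finset.mem_coe, Finset.mem_filter] at hv ⊢
        exact ⟨Finset.mem_sdiff.mpr ⟨Finset.mem_univ _, hv.2⟩, rfl⟩
      · intro a _ b _ h
        exact congrArg Prod.fst h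
    omega
  -- leaf layers bound
  have hleaf : n' - 1 - L.card ≤ c1 := by
    have hLJ := Finset.card_filter_add_card_filter_not
      (s := Finset.univ.filter (fun i : Fin n' => ¬ i = z)) (fun i => ∀ w, (w, i) ∈ S)
    have hLrw : (Finset.univ.filter (fun i : Fin n' => ¬ i = z)).filter
        (fun i => ∀ w, (w, i) ∈ S) = L := by
      rw [Finset.filter_filter, hL]
    have hcardne : (Finset.univ.filter (fun i : Fin n' => ¬ i = z)).card = n' - 1 := by
      have : (Finset.univ.filter (fun i : Fin n' => ¬ i = z)) = Finset.univ.erase z := by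
        ext i; simp [Finset.mem_erase, and_comm]
      rw [this, Finset.card_erase_of_mem (Finset.mem_univ z), Finset.card_univ, Fintype.card_fin]
    obtain ⟨r⟩ : Nonempty V := Fintype.card_pos_iff.mp (by omega)
    have hinj : ((Finset.univ.filter (fun i : Fin n' => ¬ i = z)).filter
        (fun i => ¬ ∀ w, (w, i) ∈ S)).card ≤ c1 := by
      apply Finset.card_le_card_of_injOn
        (fun i => ((if h : ∃ w, (w, i) ∉ S then h.choose else r), i))
      · intro i hi
        rw [Finset.mem_coe, Finset.mem_filter, Finset.mem_filter] at hi
        obtain ⟨⟨_, hiz⟩, hni⟩ := hi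
        have hex : ∃ w, (w, i) ∉ S := by
          obtain ⟨w, hw⟩ := not_forall.mp hni
          exact ⟨w, hw⟩
        beta_reduce
        rw [dif_pos hex]
        rw [Finset.mem_coe, Finset.mem_filter]
        refine ⟨Finset.mem_sdiff.mpr ⟨Finset.mem_univ _, hex.choose_spec⟩, hiz⟩
      · intro a _ b _ h
        exact congrArg Prod.snd h
    rw [hLrw, hcardne] at hLJ
    omega
  -- main case analysis
  have hA2 : 2 ≤ A.card := by
    by_contra hA1
    have hAle : A.card ≤ n := by
      rw [hn]; exact le_trans (Finset.card_filter_le _ _) (le_of_eq (Finset.card_univ))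
    omega

  obtain ⟨u, hu, v, hv, huv⟩ := Finset.one_lt_card.mp hA2
  rw [hA, Finset.mem_filter] at hu hv
  have huS : (u, z) ∈ S := hu.2
  have hvS : (v, z) ∈ S := hv.2
  by_cases hL2 : 2 ≤ L.card
  · obtain ⟨j₁, hj₁, j₂, hj₂, hjj⟩ := Finset.one_lt_card.mp hL2
    rw [hL, Finset.mem_filter] at hj₁ hj₂
    obtain ⟨P₁, hP₁p, hP₁s, hP₁m⟩ := layer_path T hT S hzval hj₁.2.1 huv hj₁.2.2 huS hvS
    obtain ⟨P₂, hP₂p, hP₂s, _⟩ := layer_path T hT S hzval hj₂.2.1 huv hj₂.2.2 huS hvS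
    have heq : (⟨P₁, hP₁p⟩ : ((T.boxProd (_root_.starGraph n')).induce
        (↑S : Set (V × Fin n'))).Path _ _) = ⟨P₂, hP₂p⟩ := hAc.path_unique _ _
    have hPeq : P₁ = P₂ := Subtype.mk_eq_mk.mp heq
    have hmem2 := hPeq ▸ hP₁m
    rcases hP₂s _ hmem2 with hcl | hcl
    · exact hj₁.2.1 hcl
    · exact hjj (by exact hcl)
  · -- at most one full leaf layer
    have hAle : A.card ≤ n := by
      rw [hn]; exact le_trans (Finset.card_filter_le _ _) (le_of_eq (Finset.card_univ))
    have hAn : A.card = n ∧ 1 ≤ L.card := by omega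
    have hAuniv : A = Finset.univ := Finset.eq_univ_of_card A (hAn.1.trans hn)
    have hallz : ∀ w : V, (w, z) ∈ S := by
      intro w
      have : w ∈ A := hAuniv ▸ Finset.mem_univ w
      rw [hA, Finset.mem_filter] at this
      exact this.2
    obtain ⟨j, hj⟩ := Finset.card_pos.mp (by omega : 0 < L.card)
    rw [hL, Finset.mem_filter] at hj
    obtain ⟨a, b, hab⟩ : ∃ a b : V, T.Adj a b := by
      obtain ⟨x, y, hxy⟩ := Fintype.exists_pair_of_one_lt_card (show 1 < Fintype.card V by rw [← hn]; omega)
      obtain ⟨W⟩ := hT.isConnected.preconnected x y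
      cases W with
      | nil => exact absurd rfl hxy
      | cons h p => exact ⟨_, _, h⟩
    obtain ⟨P₁, hP₁p, hP₁s, hP₁m⟩ :=
      layer_path T hT S hzval hj.2.1 hab.ne hj.2.2 (hallz a) (hallz b)
    have hadj : ((T.boxProd (_root_.starGraph n')).induce (↑S : Set (V × Fin n'))).Adj
        ⟨(a, z), Finset.mem_coe.mpr (hallz a)⟩ ⟨(b, z), Finset.mem_coe.mpr (hallz b)⟩ := by
      show (T.boxProd (_root_.starGraph n')).Adj (a, z) (b, z)
      rw [boxProd_adj]
      exact Or.inl ⟨hab, rfl⟩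
    have hP₂p : (Walk.cons hadj Walk.nil).IsPath := by
      rw [Walk.cons_isPath_iff]
      refine ⟨Walk.IsPath.nil, ?_⟩
      rw [Walk.support_nil, List.mem_singleton]
      intro hc
      have : ((a, z) : V × Fin n') = (b, z) := congrArg Subtype.val hc
      exact hab.ne (congrArg Prod.fst this)
    have heq : (⟨P₁, hP₁p⟩ : ((T.boxProd (_root_.starGraph n')).induce
        (↑S : Set (V × Fin n'))).Path _ _) = ⟨Walk.cons hadj Walk.nil, hP₂p⟩ :=
      hAc.path_unique _ _
    have hPeq : P₁ = Walk.cons hadj Walk.nil := Subtype.mk_eq_mk.mp heq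
    have hmem2 := hPeq ▸ hP₁m
    rw [Walk.support_cons, Walk.support_nil] at hmem2
    rcases List.mem_cons.mp hmem2 with hcl | hcl
    · have : ((a, j) : V × Fin n') = (a, z) := congrArg Subtype.val hcl
      exact hj.2.1 (congrArg Prod.snd this)
    · rw [List.mem_singleton] at hcl
      have : ((a, j) : V × Fin n') = (b, z) := congrArg Subtype.val hcl
      exact hj.2.1 (congrArg Prod.snd this)


end ForestAux

theorem forest_tree_boxProd_star
    {V : Type*} [Fintype V]
    (T : SimpleGraph V) (n' : ℕ)
    (h2 : 2 ≤ Fintype.card V) (hnn' : Fintype.card V ≤ n')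
    (hT : T.IsTree) :
    forestNumber (T.boxProd (_root_.starGraph n')) =
      Fintype.card V * n' - Fintype.card V + 1 := by
  classical
  have hub : ∀ k ∈ {k | ∃ S : Finset (V × Fin n'), S.card = k ∧
      ((T.boxProd (_root_.starGraph n')).induce (↑S : Set (V × Fin n'))).IsAcyclic},
      k ≤ Fintype.card V * n' - Fintype.card V + 1 := by
    rintro k ⟨S, rfl, hac⟩
    exact ForestAux.upper_bound T n' h2 hnn' hT S hac
  obtain ⟨S₀, hc₀, ha₀⟩ := ForestAux.lower_bound T n' h2 hnn' hT
  have hmem : Fintype.card V * n' - Fintype.card V + 1 ∈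
      {k | ∃ S : Finset (V × Fin n'), S.card = k ∧
      ((T.boxProd (_root_.starGraph n')).induce (↑S : Set (V × Fin n'))).IsAcyclic} :=
    ⟨S₀, hc₀, ha₀⟩
  apply le_antisymm
  · exact csSup_le ⟨_, hmem⟩ hub
  · exact le_csSup ⟨_, hub⟩ hmem
end

section
/- If T and T' are trees of respective orders n and n' with n' > n ≥ 2, and T' is not isomorphic to the star S_{n'}, then the decycling number satisfies ∇(T □ T') ≥ n. -/
open SimpleGraph

namespace DecyclingAux

variable {V : Type*} {G : SimpleGraph V} {s : Set V}

def liftW : ∀ {a b : V} (p : G.Walk a b), (∀ x ∈ p.support, x ∈ s) →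
    ∀ (ha : a ∈ s) (hb : b ∈ s), (G.induce s).Walk ⟨a, ha⟩ ⟨b, hb⟩
  | _, _, SimpleGraph.Walk.nil, _, _, _ => SimpleGraph.Walk.nil
  | _, _, SimpleGraph.Walk.cons h p, hs, ha, hb =>
      SimpleGraph.Walk.cons (by simpa using h)
        (liftW p (fun x hx => hs x (by rw [Walk.support_cons]; exact List.mem_cons_of_mem _ hx))
          (hs _ (by rw [Walk.support_cons]; exact List.mem_cons_of_mem _ p.start_mem_support)) hb)

lemma liftW_support : ∀ {a b : V} (p : G.Walk a b) (hs : ∀ x ∈ p.support, x ∈ s)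
    (ha : a ∈ s) (hb : b ∈ s), (liftW p hs ha hb).support.map Subtype.val = p.support
  | _, _, SimpleGraph.Walk.nil, _, _, _ => rfl
  | _, _, SimpleGraph.Walk.cons h p, hs, ha, hb => by
      rw [liftW, Walk.support_cons, Walk.support_cons, List.map_cons, liftW_support]

lemma key {V W : Type*} {T : SimpleGraph V} {T' : SimpleGraph W} {S : Finset (V × W)}
    {v1 v2 : V} {w1 w2 : W} (hv : v1 ≠ v2) (hw : w1 ≠ w2)
    (P : T.Walk v1 v2) (hP : P.IsPath) (Q : T'.Walk w1 w2) (hQ : Q.IsPath)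
    (hrow : ∀ u ∈ P.support, (u, w1) ∉ S ∧ (u, w2) ∉ S)
    (hcol : ∀ w ∈ Q.support, (v1, w) ∉ S ∧ (v2, w) ∉ S)
    (hacyc : ((T.boxProd T').induce ((↑S : Set (V × W))ᶜ)).IsAcyclic) : False := by
  classical
  let p1 : (T.boxProd T').Walk (v1, w1) (v2, w1) := P.boxProdLeft T' w1
  let q2 : (T.boxProd T').Walk (v2, w1) (v2, w2) := Q.boxProdRight T v2
  let q1 : (T.boxProd T').Walk (v1, w1) (v1, w2) := Q.boxProdRight T v1
  let p2 : (T.boxProd T').Walk (v1, w2) (v2, w2) := P.boxProdLeft T' w2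
  have hp1s : p1.support = P.support.map (fun u => (u, w1)) := by
    simp only [p1, Walk.boxProdLeft]; exact Walk.support_map _ _
  have hp2s : p2.support = P.support.map (fun u => (u, w2)) := by
    simp only [p2, Walk.boxProdLeft]; exact Walk.support_map _ _
  have hq1s : q1.support = Q.support.map (fun w => (v1, w)) := by
    simp only [q1, Walk.boxProdRight]; exact Walk.support_map _ _
  have hq2s : q2.support = Q.support.map (fun w => (v2, w)) := by
    simp only [q2, Walk.boxProdRight]; exact Walk.support_map _ _
  have hPnd := hP.support_nodup
  have hQnd := hQ.support_nodup
  have hPhead : v1 ∉ P.support.tail := by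
    have := hPnd
    rw [P.support_eq_cons] at this
    exact (List.nodup_cons.mp this).1
  have hQhead : w1 ∉ Q.support.tail := by
    have := hQnd
    rw [Q.support_eq_cons] at this
    exact (List.nodup_cons.mp this).1
  let pA : (T.boxProd T').Walk (v1, w1) (v2, w2) := p1.append q2
  let pB : (T.boxProd T').Walk (v1, w1) (v2, w2) := q1.append p2
  have hApath : pA.IsPath := by
    rw [Walk.isPath_def, Walk.support_append, List.nodup_append]
    refine ⟨?_, ?_, ?_⟩
    · rw [hp1s]; exact hPnd.map (fun a b h => congrArg Prod.fst h)
    · exact List.Nodup.sublist (List.tail_sublist _)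
        (hq2s ▸ hQnd.map (fun a b h => congrArg Prod.snd h))
    · intro x hx1 x' hx2 hxx
      subst hxx
      rw [hp1s] at hx1
      obtain ⟨u, hu, rfl⟩ := List.mem_map.mp hx1
      have ht : ((u, w1) : V × W) ∈ (Q.support.map (fun w => (v2, w))).tail := by
        rw [← hq2s]; exact hx2
      rw [← List.map_tail] at ht
      obtain ⟨w', hw', hww'⟩ := List.mem_map.mp ht
      simp only [Prod.mk.injEq] at hww'
      exact hQhead (hww'.2 ▸ hw')
  have hBpath : pB.IsPath := by
    rw [Walk.isPath_def, Walk.support_append, List.nodup_append]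
    refine ⟨?_, ?_, ?_⟩
    · rw [hq1s]; exact hQnd.map (fun a b h => congrArg Prod.snd h)
    · exact List.Nodup.sublist (List.tail_sublist _)
        (hp2s ▸ hPnd.map (fun a b h => congrArg Prod.fst h))
    · intro x hx1 x' hx2 hxx
      subst hxx
      rw [hq1s] at hx1
      obtain ⟨w, hwmem, rfl⟩ := List.mem_map.mp hx1
      have ht : ((v1, w) : V × W) ∈ (P.support.map (fun u => (u, w2))).tail := by
        rw [← hp2s]; exact hx2
      rw [← List.map_tail] at ht
      obtain ⟨u', hu', huu'⟩ := List.mem_map.mp ht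
      simp only [Prod.mk.injEq] at huu'
      exact hPhead (huu'.1 ▸ hu')
  have hAmem : ∀ x ∈ pA.support, x ∈ ((↑S : Set (V × W))ᶜ) := by
    intro x hx
    rw [Walk.mem_support_append_iff] at hx
    rcases hx with hx | hx
    · rw [hp1s] at hx
      obtain ⟨u, hu, rfl⟩ := List.mem_map.mp hx
      exact fun hmem => (hrow u hu).1 hmem
    · rw [hq2s] at hx
      obtain ⟨w, hwm, rfl⟩ := List.mem_map.mp hx
      exact fun hmem => (hcol w hwm).2 hmem
  have hBmem : ∀ x ∈ pB.support, x ∈ ((↑S : Set (V × W))ᶜ) := by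
    intro x hx
    rw [Walk.mem_support_append_iff] at hx
    rcases hx with hx | hx
    · rw [hq1s] at hx
      obtain ⟨w, hwm, rfl⟩ := List.mem_map.mp hx
      exact fun hmem => (hcol w hwm).1 hmem
    · rw [hp2s] at hx
      obtain ⟨u, hu, rfl⟩ := List.mem_map.mp hx
      exact fun hmem => (hrow u hu).2 hmem
  have hv1w1 : ((v1, w1) : V × W) ∈ ((↑S : Set (V × W))ᶜ) :=
    fun hmem => (hrow v1 P.start_mem_support).1 hmem
  have hv2w2 : ((v2, w2) : V × W) ∈ ((↑S : Set (V × W))ᶜ) :=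
    fun hmem => (hrow v2 P.end_mem_support).2 hmem
  let A := liftW pA hAmem hv1w1 hv2w2
  let B := liftW pB hBmem hv1w1 hv2w2
  have hApath' : A.IsPath := by
    rw [Walk.isPath_def]
    apply List.Nodup.of_map Subtype.val
    rw [liftW_support]
    exact hApath.support_nodup
  have hBpath' : B.IsPath := by
    rw [Walk.isPath_def]
    apply List.Nodup.of_map Subtype.val
    rw [liftW_support]
    exact hBpath.support_nodup
  have hABne : A ≠ B := by
    intro h
    have hsup : pA.support = pB.support :=
      (liftW_support pA hAmem hv1w1 hv2w2).symm.trans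
        ((congrArg (fun t => t.support.map Subtype.val) h).trans
          (liftW_support pB hBmem hv1w1 hv2w2))
    have hmemA : ((v2, w1) : V × W) ∈ pA.support := by
      rw [Walk.mem_support_append_iff]; left; exact p1.end_mem_support
    rw [hsup, Walk.mem_support_append_iff] at hmemA
    rcases hmemA with hx | hx
    · rw [hq1s] at hx
      obtain ⟨w, _, hww⟩ := List.mem_map.mp hx
      simp only [Prod.mk.injEq] at hww
      exact hv hww.1
    · rw [hp2s] at hx
      obtain ⟨u, _, huu⟩ := List.mem_map.mp hx
      simp only [Prod.mk.injEq] at huu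
      exact hw huu.2.symm
  exact hABne (congrArg Subtype.val (hacyc.path_unique ⟨A, hApath'⟩ ⟨B, hBpath'⟩))

end DecyclingAux


theorem decycling_boxProd_trees_nonstar_lower_bound
    {V W : Type*} [Fintype V] [Fintype W]
    (T : SimpleGraph V) (T' : SimpleGraph W) (n n' : ℕ)
    (hn : Fintype.card V = n) (hn' : Fintype.card W = n')
    (h2 : 2 ≤ n) (hnn' : n < n')
    (hT : T.IsTree) (hT' : T'.IsTree)
    (hstar : IsEmpty (T' ≃g _root_.starGraph n')) :
    n ≤ decyclingNumber (T.boxProd T') := by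
  classical
  by_contra hcon
  push_neg at hcon
  have hne : Set.Nonempty {k | ∃ S : Finset (V × W), S.card = k ∧
      ((T.boxProd T').induce ((↑S : Set (V × W))ᶜ)).IsAcyclic} := by
    refine ⟨(Finset.univ : Finset (V × W)).card, Finset.univ, rfl, ?_⟩
    intro v c _
    have hemp : IsEmpty ((↑(Finset.univ : Finset (V × W)) : Set (V × W))ᶜ : Set (V × W)) := by
      rw [Finset.coe_univ, Set.compl_univ]
      exact Set.isEmpty_coe_sort.mpr rfl
    exact (hemp.false v).elim
  obtain ⟨S, hScard, hacyc⟩ := Nat.sInf_mem hne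
  have hSlt : S.card < n := by rw [hScard]; exact hcon
  -- a good column exists
  have hexgood : ∃ v, v ∉ S.image Prod.fst := by
    by_contra h
    push_neg at h
    have := congrArg Finset.card (Finset.eq_univ_iff_forall.mpr h)
    rw [Finset.card_univ, hn] at this
    have := Finset.card_image_le (s := S) (f := Prod.fst)
    omega
  obtain ⟨vs, hvs⟩ := hexgood
  have hvsfree : ∀ w, (vs, w) ∉ S := fun w hw =>
    hvs (Finset.mem_image.mpr ⟨(vs, w), hw, rfl⟩)
  -- every other column is bad
  have hbad : ∀ v, v ≠ vs → v ∈ S.image Prod.fst := by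
    intro v2 hne2
    by_contra hv2
    have hv2free : ∀ w, (v2, w) ∉ S := fun w hw =>
      hv2 (Finset.mem_image.mpr ⟨(v2, w), hw, rfl⟩)
    obtain ⟨P₀⟩ := hT.isConnected.preconnected vs v2
    set P := P₀.bypass with hPdef
    have hP : P.IsPath := P₀.bypass_isPath
    set blocked : Finset W := (S.filter (fun x => x.1 ∈ P.support)).image Prod.snd with hbdef
    have hbl : blocked.card ≤ S.card :=
      le_trans Finset.card_image_le (Finset.card_filter_le _ _)
    have h2free : 1 < (blockedᶜ : Finset W).card := by
      rw [Finset.card_compl, hn']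
      omega
    obtain ⟨w1, hw1, w2, hw2, hww⟩ := Finset.one_lt_card.mp h2free
    have hfree : ∀ w ∈ (blockedᶜ : Finset W), ∀ u ∈ P.support, (u, w) ∉ S := by
      intro w hwc u hu hmem
      exact (Finset.mem_compl.mp hwc)
        (Finset.mem_image.mpr ⟨(u, w), Finset.mem_filter.mpr ⟨hmem, hu⟩, rfl⟩)
    obtain ⟨Q₀⟩ := hT'.isConnected.preconnected w1 w2
    exact DecyclingAux.key (Ne.symm hne2) hww P hP Q₀.bypass Q₀.bypass_isPath
      (fun u hu => ⟨hfree w1 hw1 u hu, hfree w2 hw2 u hu⟩)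
      (fun w _ => ⟨hvsfree w, hv2free w⟩) hacyc
  -- counting: S has exactly one vertex in each column other than vs
  have h1 : n - 1 ≤ (S.image Prod.fst).card := by
    have hc : (Finset.univ \ {vs} : Finset V).card = n - 1 := by
      rw [Finset.card_sdiff_of_subset (Finset.singleton_subset_iff.mpr (Finset.mem_univ _)),
        Finset.card_univ, hn, Finset.card_singleton]
    rw [← hc]
    refine Finset.card_le_card ?_
    intro v hv
    rw [Finset.mem_sdiff, Finset.mem_singleton] at hv
    exact hbad v hv.2
  have heq : (S.image Prod.fst).card = S.card := by
    have := Finset.card_image_le (s := S) (f := Prod.fst)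
    omega
  have hinj : Set.InjOn Prod.fst (↑S : Set (V × W)) := Finset.card_image_iff.mp heq
  -- a neighbor u of vs, with unique S-vertex (u, r)
  have hexadj : ∃ u, T.Adj vs u := by
    have : Nontrivial V := Fintype.one_lt_card_iff_nontrivial.mp (by omega)
    obtain ⟨v, hvne⟩ := exists_ne vs
    obtain ⟨p⟩ := hT.isConnected.preconnected vs v
    cases p with
    | nil => exact absurd rfl hvne
    | cons h _ => exact ⟨_, h⟩
  obtain ⟨u, hadj⟩ := hexadj
  obtain ⟨⟨u', r⟩, hxS, huu⟩ := Finset.mem_image.mp (hbad u hadj.ne')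
  have : u' = u := huu
  subst this
  have huniq : ∀ w, (u', w) ∈ S → w = r := by
    intro w hw
    have := hinj (Finset.mem_coe.mpr hw) (Finset.mem_coe.mpr hxS) rfl
    exact congrArg Prod.snd this
  -- every edge of T' touches r
  have htouch : ∀ a b, T'.Adj a b → a = r ∨ b = r := by
    intro a b hab
    by_contra hc
    push_neg at hc
    refine DecyclingAux.key hadj.ne hab.ne (Walk.cons hadj Walk.nil) ?_
      (Walk.cons hab Walk.nil) ?_ ?_ ?_ hacyc
    · simp [Walk.isPath_def, hadj.ne]
    · simp [Walk.isPath_def, hab.ne]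
    · intro x hx
      simp only [Walk.support_cons, Walk.support_nil, List.mem_cons,
        List.mem_singleton, List.not_mem_nil, or_false] at hx
      rcases hx with rfl | rfl
      · exact ⟨hvsfree a, hvsfree b⟩
      · exact ⟨fun hm => hc.1 (huniq a hm), fun hm => hc.2 (huniq b hm)⟩
    · intro w hw'
      simp only [Walk.support_cons, Walk.support_nil, List.mem_cons,
        List.mem_singleton, List.not_mem_nil, or_false] at hw'
      rcases hw' with rfl | rfl
      · exact ⟨hvsfree w, fun hm => hc.1 (huniq w hm)⟩
      · exact ⟨hvsfree w, fun hm => hc.2 (huniq w hm)⟩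
  -- r is adjacent to everything else
  have hradj : ∀ w, w ≠ r → T'.Adj r w := by
    intro w hwr
    obtain ⟨p⟩ := hT'.isConnected.preconnected w r
    cases p with
    | nil => exact absurd rfl hwr
    | cons h _ =>
      rcases htouch _ _ h with h1 | h2
      · exact absurd h1 hwr
      · exact (h2 ▸ h).symm
  -- build the isomorphism with the star, contradiction
  have hn'pos : 0 < n' := by omega
  haveI : NeZero n' := ⟨by omega⟩
  let e0 : W ≃ Fin n' := Fintype.equivFinOfCardEq hn'
  let f : W ≃ Fin n' := e0.trans (Equiv.swap (e0 r) 0)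
  have hfr : f r = 0 := by simp [f, Equiv.swap_apply_left]
  have hf0 : ∀ a, f a = 0 ↔ a = r := fun a =>
    ⟨fun h => f.injective (h.trans hfr.symm), fun h => by rw [h, hfr]⟩
  refine hstar.false ?_
  refine ⟨f, ?_⟩
  intro a b
  show (f a ≠ f b ∧ ((f a).val = 0 ∨ (f b).val = 0)) ↔ T'.Adj a b
  constructor
  · rintro ⟨hfne, h0⟩
    have hne' : a ≠ b := fun h => hfne (congrArg f h)
    rcases h0 with h0 | h0
    · have ha : a = r := (hf0 a).mp (Fin.ext (by simpa using h0))
      subst ha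
      exact hradj b (fun hb => hne' hb.symm)
    · have hb : b = r := (hf0 b).mp (Fin.ext (by simpa using h0))
      subst hb
      exact (hradj a hne').symm
  · intro hab
    refine ⟨fun h => hab.ne (f.injective h), ?_⟩
    rcases htouch a b hab with h | h
    · left; rw [h, hfr]; simp
    · right; rw [h, hfr]; simp
end

section
/- If T and T' are trees, both of order n ≥ 4, and neither T is isomorphic to the star S_n nor T' is isomorphic to the star S_n, then the decycling number satisfies ∇(T □ T') ≥ n. -/
open SimpleGraph

/-! ### Auxiliary lemmas -/

section Aux

variable {V W : Type*} {T : SimpleGraph V} {T' : SimpleGraph W}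

lemma DecyclingAux.mem_compl_of_notmem (S : Finset (V × W)) {p : V × W} (h : p ∉ S) :
    p ∈ ((↑S : Set (V × W))ᶜ) := by simpa using h

open DecyclingAux

/-- Homomorphism from `T'` into the surviving induced subgraph along a fully surviving row. -/
def DecyclingAux.rowHom (S : Finset (V × W)) (v : V) (hfull : ∀ w, (v, w) ∉ S) :
    T' →g ((T.boxProd T').induce ((↑S : Set (V × W))ᶜ)) where
  toFun w := ⟨(v, w), mem_compl_of_notmem S (hfull w)⟩
  map_rel' := fun h => boxProd_adj_right.mpr h

/-- Homomorphism from `T` into the surviving induced subgraph along a fully surviving column. -/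
def DecyclingAux.colHom (S : Finset (V × W)) (w : W) (hfull : ∀ v, (v, w) ∉ S) :
    T →g ((T.boxProd T').induce ((↑S : Set (V × W))ᶜ)) where
  toFun v := ⟨(v, w), mem_compl_of_notmem S (hfull v)⟩
  map_rel' := fun h => boxProd_adj_left.mpr h

lemma DecyclingAux.rowHom_inj (S : Finset (V × W)) (v : V) (hfull : ∀ w, (v, w) ∉ S) :
    Function.Injective (rowHom (T := T) (T' := T') S v hfull) :=
  fun _ _ h => congrArg (fun z => (Subtype.val z).2) h

lemma DecyclingAux.colHom_inj (S : Finset (V × W)) (w : W) (hfull : ∀ v, (v, w) ∉ S) :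
    Function.Injective (colHom (T := T) (T' := T') S w hfull) :=
  fun _ _ h => congrArg (fun z => (Subtype.val z).1) h

lemma DecyclingAux.isPath_append_aux {X : Type*} {G : SimpleGraph X} {u v w : X}
    {p : G.Walk u v} {q : G.Walk v w} (hp : p.IsPath) (hq : q.IsPath)
    (h : ∀ x, x ∈ p.support → x ∈ q.support → x = v) : (p.append q).IsPath := by
  rw [Walk.isPath_def, Walk.support_append]
  refine List.Nodup.append hp.support_nodup (hq.support_nodup.tail) ?_
  intro x hx hx'
  have hv : v ∉ q.support.tail := by
    have hnd := hq.support_nodup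
    rw [Walk.support_eq_cons q] at hnd
    exact (List.nodup_cons.mp hnd).1
  have hxq : x ∈ q.support := q.mem_support_iff.mpr (Or.inr hx')
  exact hv (h x hx hxq ▸ hx')

lemma DecyclingAux.no_two_paths {X : Type*} {G : SimpleGraph X} (hG : G.IsAcyclic) {u v : X}
    {p q : G.Walk u v} (hp : p.IsPath) (hq : q.IsPath) (hne : p ≠ q) : False := by
  have := isAcyclic_iff_path_unique.mp hG ⟨p, hp⟩ ⟨q, hq⟩
  exact hne (by injection this)

/-- If a `4`-cycle of the box product survives, the surviving graph is not acyclic. -/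
lemma DecyclingAux.four_cycle (S : Finset (V × W))
    (hac : ((T.boxProd T').induce ((↑S : Set (V × W))ᶜ)).IsAcyclic)
    {v₁ v₂ : V} {w₁ w₂ : W} (hv : T.Adj v₁ v₂) (hw : T'.Adj w₁ w₂)
    (h11 : (v₁,w₁) ∉ S) (h12 : (v₁,w₂) ∉ S) (h21 : (v₂,w₁) ∉ S) (h22 : (v₂,w₂) ∉ S) :
    False := by
  let a : ((↑S : Set (V × W))ᶜ : Set (V×W)) := ⟨(v₁,w₁), mem_compl_of_notmem S h11⟩
  let b : ((↑S : Set (V × W))ᶜ : Set (V×W)) := ⟨(v₁,w₂), mem_compl_of_notmem S h12⟩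
  let c : ((↑S : Set (V × W))ᶜ : Set (V×W)) := ⟨(v₂,w₁), mem_compl_of_notmem S h21⟩
  let d : ((↑S : Set (V × W))ᶜ : Set (V×W)) := ⟨(v₂,w₂), mem_compl_of_notmem S h22⟩
  have hab : ((T.boxProd T').induce ((↑S : Set (V × W))ᶜ)).Adj a b := boxProd_adj_right.mpr hw
  have hac' : ((T.boxProd T').induce ((↑S : Set (V × W))ᶜ)).Adj a c := boxProd_adj_left.mpr hv
  have hcd : ((T.boxProd T').induce ((↑S : Set (V × W))ᶜ)).Adj c d := boxProd_adj_right.mpr hw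
  have hdb : ((T.boxProd T').induce ((↑S : Set (V × W))ᶜ)).Adj d b := boxProd_adj_left.mpr hv.symm
  let p : ((T.boxProd T').induce ((↑S : Set (V × W))ᶜ)).Walk a b := Walk.cons hab Walk.nil
  let q : ((T.boxProd T').induce ((↑S : Set (V × W))ᶜ)).Walk a b :=
    Walk.cons hac' (Walk.cons hcd (Walk.cons hdb Walk.nil))
  have hp : p.IsPath := by
    simp [p, Walk.isPath_def, a, b, Subtype.ext_iff, Prod.ext_iff, hw.ne]
  have hq : q.IsPath := by
    simp [q, Walk.isPath_def, a, b, c, d, Subtype.ext_iff, Prod.ext_iff, hw.ne, hv.ne,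
      hv.ne', hw.ne']
  have hne : p ≠ q := by
    intro h
    have := congrArg Walk.length h
    simp [p, q] at this
  exact no_two_paths hac hp hq hne

/-- Two fully surviving rows plus two fully surviving columns give two distinct paths. -/
lemma DecyclingAux.double_L (S : Finset (V × W)) (hTc : T.Connected) (hT'c : T'.Connected)
    (hac : ((T.boxProd T').induce ((↑S : Set (V × W))ᶜ)).IsAcyclic)
    {v₁ v₂ : V} {w₁ w₂ : W} (hvne : v₁ ≠ v₂) (hwne : w₁ ≠ w₂)
    (hr₁ : ∀ w, (v₁, w) ∉ S) (hr₂ : ∀ w, (v₂, w) ∉ S)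
    (hc₁ : ∀ v, (v, w₁) ∉ S) (hc₂ : ∀ v, (v, w₂) ∉ S) : False := by
  classical
  obtain ⟨pTw⟩ := hTc.preconnected v₁ v₂
  obtain ⟨pT'w⟩ := hT'c.preconnected w₁ w₂
  let pT := pTw.toPath
  let pT' := pT'w.toPath
  -- path A : row v₁ then column w₂
  let A1 := Walk.map (rowHom (T := T) S v₁ hr₁) pT'.1
  let A2 := Walk.map (colHom (T' := T') S w₂ hc₂) pT.1
  let A := A1.append A2
  have hA1 : A1.IsPath := Walk.map_isPath_of_injective (rowHom_inj S v₁ hr₁) pT'.2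
  have hA2 : A2.IsPath := Walk.map_isPath_of_injective (colHom_inj S w₂ hc₂) pT.2
  have hA : A.IsPath := by
    refine isPath_append_aux hA1 hA2 ?_
    intro x hx hx'
    replace hx : x ∈ (Walk.map (rowHom (T := T) S v₁ hr₁) pT'.1).support := hx
    replace hx' : x ∈ (Walk.map (colHom (T' := T') S w₂ hc₂) pT.1).support := hx'
    rw [Walk.support_map, List.mem_map] at hx hx'
    obtain ⟨w, _, rfl⟩ := hx
    obtain ⟨v, _, hvx⟩ := hx'
    have h2 : (w₂ : W) = w := congrArg (fun z => (Subtype.val z).2) hvx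
    exact congrArg _ h2.symm
  -- path B : column w₁ then row v₂
  let B1 := Walk.map (colHom (T' := T') S w₁ hc₁) pT.1
  let B2 := Walk.map (rowHom (T := T) S v₂ hr₂) pT'.1
  let B := B1.append B2
  have hB1 : B1.IsPath := Walk.map_isPath_of_injective (colHom_inj S w₁ hc₁) pT.2
  have hB2 : B2.IsPath := Walk.map_isPath_of_injective (rowHom_inj S v₂ hr₂) pT'.2
  have hB : B.IsPath := by
    refine isPath_append_aux hB1 hB2 ?_
    intro x hx hx'
    replace hx : x ∈ (Walk.map (colHom (T' := T') S w₁ hc₁) pT.1).support := hx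
    replace hx' : x ∈ (Walk.map (rowHom (T := T) S v₂ hr₂) pT'.1).support := hx'
    rw [Walk.support_map, List.mem_map] at hx hx'
    obtain ⟨v, _, rfl⟩ := hx
    obtain ⟨w, _, hvx⟩ := hx'
    have h1 : v₂ = v := congrArg (fun z => (Subtype.val z).1) hvx
    exact congrArg _ h1.symm
  -- the junction of A is not in B
  have hne : A ≠ B := by
    intro h
    have hj : (⟨(v₁, w₂), mem_compl_of_notmem S (hr₁ w₂)⟩ : ((↑S : Set (V × W))ᶜ : Set (V×W)))
        ∈ A.support := by
      exact (Walk.mem_support_append_iff (p := A1) (p' := A2)).mpr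
        (Or.inl (Walk.end_mem_support A1))
    rw [h] at hj
    replace hj := (Walk.mem_support_append_iff (p := Walk.map (colHom (T' := T') S w₁ hc₁) pT.1)
      (p' := Walk.map (rowHom (T := T) S v₂ hr₂) pT'.1)).mp hj
    rcases hj with hj | hj
    · rw [Walk.support_map, List.mem_map] at hj
      obtain ⟨v, _, hvx⟩ := hj
      exact hwne (congrArg (fun z => (Subtype.val z).2) hvx)
    · replace hj : (⟨(v₁, w₂), mem_compl_of_notmem S (hr₁ w₂)⟩ : ((↑S : Set (V × W))ᶜ : Set (V×W)))
          ∈ (Walk.map (rowHom (T := T) S v₂ hr₂) pT'.1).support := hj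
      rw [Walk.support_map, List.mem_map] at hj
      obtain ⟨w, _, hvx⟩ := hj
      exact hvne ((congrArg (fun z => (Subtype.val z).1) hvx).symm)
  exact no_two_paths hac hA hB hne

lemma DecyclingAux.count_full {α β : Type*} [Fintype α] [Fintype β] [DecidableEq α]
    [DecidableEq β] (S : Finset (α × β)) :
    Fintype.card α ≤ (Finset.univ.filter (fun a => ∀ b, (a, b) ∉ S)).card + S.card := by
  classical
  have hsub : Finset.univ.filter (fun a => ¬ ∀ b, (a, b) ∉ S) ⊆ S.image Prod.fst := by
    intro a ha
    simp only [Finset.mem_filter] at ha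
    push_neg at ha
    obtain ⟨b, hb⟩ := ha.2
    exact Finset.mem_image.mpr ⟨(a, b), hb, rfl⟩
  have h1 := Finset.card_filter_add_card_filter_not
    (s := (Finset.univ : Finset α)) (p := fun a => ∀ b, (a, b) ∉ S)
  have h2 : (Finset.univ.filter (fun a => ¬ ∀ b, (a, b) ∉ S)).card ≤ S.card :=
    le_trans (Finset.card_le_card hsub) (Finset.card_image_le)
  have := Finset.card_univ (α := α)
  omega

lemma DecyclingAux.fiber_unique {α β : Type*} [Fintype α] [Fintype β] [DecidableEq α]
    [DecidableEq β] {n : ℕ}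
    (hα : Fintype.card α = n) (S : Finset (α × β)) (hS : S.card < n)
    (v₀ : α) (hfull : ∀ b, (v₀, b) ∉ S)
    (hnonfull : ∀ a, a ≠ v₀ → ∃ b, (a, b) ∈ S) :
    ∀ a, a ≠ v₀ → ∃ b, (a, b) ∈ S ∧ ∀ b', (a, b') ∈ S → b' = b := by
  classical
  set g := fun a => (S.filter (fun x => x.1 = a)).card with hg
  have hsum : ∑ a : α, g a = S.card :=
    (Finset.card_eq_sum_card_fiberwise (fun x _ => Finset.mem_univ x.1)).symm
  have hpos : ∀ a ∈ Finset.univ.erase v₀, 1 ≤ g a := by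
    intro a ha
    obtain ⟨b, hb⟩ := hnonfull a (Finset.mem_erase.mp ha).1
    exact Finset.card_pos.mpr ⟨(a, b), Finset.mem_filter.mpr ⟨hb, rfl⟩⟩
  have h0 : g v₀ = 0 := by
    refine Finset.card_eq_zero.mpr (Finset.filter_eq_empty_iff.mpr ?_)
    rintro ⟨a, b⟩ hx rfl
    exact hfull b hx
  have hsum' : ∑ a ∈ Finset.univ.erase v₀, g a = S.card := by
    have := Finset.add_sum_erase Finset.univ g (Finset.mem_univ v₀)
    omega
  have hcard : (Finset.univ.erase v₀).card = n - 1 := by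
    rw [Finset.card_erase_of_mem (Finset.mem_univ v₀), Finset.card_univ, hα]
  have hone : ∀ a ∈ Finset.univ.erase v₀, g a = 1 := by
    by_contra hc
    push_neg at hc
    obtain ⟨a, ha, hga⟩ := hc
    have hlt : ∑ _x ∈ Finset.univ.erase v₀, 1 < ∑ a ∈ Finset.univ.erase v₀, g a :=
      Finset.sum_lt_sum hpos ⟨a, ha, lt_of_le_of_ne (hpos a ha) (Ne.symm hga)⟩
    rw [Finset.sum_const, smul_eq_mul, mul_one, hsum', hcard] at hlt
    omega
  intro a ha
  have h1 : g a = 1 := hone a (Finset.mem_erase.mpr ⟨ha, Finset.mem_univ a⟩)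
  obtain ⟨x, hx⟩ := Finset.card_eq_one.mp h1
  have hxmem : x ∈ S.filter (fun y => y.1 = a) := hx ▸ Finset.mem_singleton_self x
  rw [Finset.mem_filter] at hxmem
  refine ⟨x.2, ?_, ?_⟩
  · have : x = (a, x.2) := Prod.ext hxmem.2 rfl
    exact this ▸ hxmem.1
  · intro b' hb'
    have : (a, b') ∈ S.filter (fun y => y.1 = a) := Finset.mem_filter.mpr ⟨hb', rfl⟩
    rw [hx, Finset.mem_singleton] at this
    exact congrArg Prod.snd this

lemma DecyclingAux.star_center {β : Type*} {G : SimpleGraph β} (hconn : G.Connected) (w₀ : β)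
    (h : ∀ a b, G.Adj a b → a = w₀ ∨ b = w₀) :
    ∀ a b, G.Adj a b ↔ a ≠ b ∧ (a = w₀ ∨ b = w₀) := by
  have key : ∀ a, a ≠ w₀ → G.Adj a w₀ := by
    intro a ha
    obtain ⟨p⟩ := hconn.preconnected a w₀
    cases p with
    | nil => exact absurd rfl ha
    | cons hadj q =>
      rcases h _ _ hadj with h1 | h2
      · exact absurd h1 ha
      · exact h2 ▸ hadj
  intro a b
  constructor
  · intro hab; exact ⟨G.ne_of_adj hab, h a b hab⟩
  · rintro ⟨hne, rfl | rfl⟩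
    · exact (key b (Ne.symm hne)).symm
    · exact key a hne

lemma DecyclingAux.star_iso {β : Type*} [Fintype β] {G : SimpleGraph β} {n : ℕ}
    (hn : Fintype.card β = n) (hpos : 0 < n) (w₀ : β)
    (hadj : ∀ a b, G.Adj a b ↔ a ≠ b ∧ (a = w₀ ∨ b = w₀)) :
    Nonempty (G ≃g _root_.starGraph n) := by
  classical
  let e₀ := Fintype.equivFinOfCardEq hn
  let e := e₀.trans (Equiv.swap (e₀ w₀) ⟨0, hpos⟩)
  have he : e w₀ = ⟨0, hpos⟩ := by simp [e, Equiv.swap_apply_left]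
  have hzero : ∀ a, e a = ⟨0, hpos⟩ ↔ a = w₀ := fun a =>
    ⟨fun h => e.injective (h.trans he.symm), fun h => h ▸ he⟩
  have main : ∀ a b, (_root_.starGraph n).Adj (e a) (e b) ↔ G.Adj a b := by
    intro a b
    rw [hadj]
    show (e a ≠ e b ∧ ((e a).val = 0 ∨ (e b).val = 0)) ↔ _
    constructor
    · rintro ⟨h1, h2⟩
      refine ⟨fun h => h1 (congrArg e h), ?_⟩
      rcases h2 with h | h
      · exact Or.inl ((hzero a).mp (Fin.ext h))
      · exact Or.inr ((hzero b).mp (Fin.ext h))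
    · rintro ⟨h1, h2⟩
      refine ⟨fun h => h1 (e.injective h), ?_⟩
      rcases h2 with rfl | rfl
      · left; rw [(hzero _).mpr rfl]
      · right; rw [(hzero _).mpr rfl]
  exact ⟨⟨e, fun {a b} => main a b⟩⟩

lemma DecyclingAux.exists_adj {α : Type*} [Fintype α] {G : SimpleGraph α} (hconn : G.Connected)
    (h2 : 2 ≤ Fintype.card α) (a : α) : ∃ b, G.Adj a b := by
  obtain ⟨c, hc⟩ := Fintype.exists_ne_of_one_lt_card (by omega) a
  obtain ⟨p⟩ := hconn.preconnected a c
  cases p with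
  | nil => exact absurd rfl hc
  | cons hadj _ => exact ⟨_, hadj⟩

end Aux

open DecyclingAux in
theorem decycling_boxProd_equal_order_nonstars_lower_bound
    {V W : Type*} [Fintype V] [Fintype W]
    (T : SimpleGraph V) (T' : SimpleGraph W) (n : ℕ)
    (hn : Fintype.card V = n) (hn' : Fintype.card W = n)
    (h4 : 4 ≤ n)
    (hT : T.IsTree) (hT' : T'.IsTree)
    (hstar : IsEmpty (T ≃g _root_.starGraph n))
    (hstar' : IsEmpty (T' ≃g _root_.starGraph n)) :
    n ≤ decyclingNumber (T.boxProd T') := by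
  classical
  -- the key combinatorial fact
  have key : ∀ S : Finset (V × W),
      ((T.boxProd T').induce ((↑S : Set (V × W))ᶜ)).IsAcyclic → n ≤ S.card := by
    intro S hac
    by_contra hlt
    push_neg at hlt
    set Z := Finset.univ.filter (fun v : V => ∀ w, (v, w) ∉ S) with hZdef
    set Z' := Finset.univ.filter (fun w : W => ∀ v, (v, w) ∉ S) with hZ'def
    have hZmem : ∀ v, v ∈ Z ↔ ∀ w, (v, w) ∉ S := by
      intro v; simp [hZdef]
    have hZ'mem : ∀ w, w ∈ Z' ↔ ∀ v, (v, w) ∉ S := by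
      intro w; simp [hZ'def]
    -- counting: many full rows and full columns
    have hZcard : n ≤ Z.card + S.card := hn ▸ count_full S
    -- transpose for columns
    set Sw : Finset (W × V) := S.image Prod.swap with hSwdef
    have hSwmem : ∀ w v, (w, v) ∈ Sw ↔ (v, w) ∈ S := by
      intro w v
      constructor
      · intro h
        obtain ⟨x, hx, hxe⟩ := Finset.mem_image.mp h
        have : x = (v, w) := by
          have := congrArg Prod.swap hxe
          simpa using this
        exact this ▸ hx
      · intro h
        exact Finset.mem_image.mpr ⟨(v, w), h, rfl⟩
    have hSwcard : Sw.card = S.card :=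
      Finset.card_image_of_injective S Prod.swap_injective
    have hZ'card : n ≤ Z'.card + S.card := by
      have := count_full Sw
      rw [hn'] at this
      have heq : Finset.univ.filter (fun w : W => ∀ v, (w, v) ∉ Sw) = Z' := by
        apply Finset.filter_congr
        intro w _
        constructor
        · intro h v hv; exact h v ((hSwmem w v).mpr hv)
        · intro h v hv; exact h v ((hSwmem w v).mp hv)
      rw [heq, hSwcard] at this
      exact this
    by_cases h2 : 2 ≤ Z.card ∧ 2 ≤ Z'.card
    · -- two full rows and two full columns: contradiction
      obtain ⟨v₁, hv₁, v₂, hv₂, hvne⟩ := Finset.one_lt_card.mp h2.1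
      obtain ⟨w₁, hw₁, w₂, hw₂, hwne⟩ := Finset.one_lt_card.mp h2.2
      exact double_L S hT.isConnected hT'.isConnected hac hvne hwne
        ((hZmem v₁).mp hv₁) ((hZmem v₂).mp hv₂) ((hZ'mem w₁).mp hw₁) ((hZ'mem w₂).mp hw₂)
    · push_neg at h2
      by_cases hz1 : Z.card ≤ 1
      · -- exactly one full row: T' must be a star
        have hz : Z.card = 1 := by omega
        obtain ⟨v₀, hv₀⟩ := Finset.card_eq_one.mp hz
        have hv₀full : ∀ w, (v₀, w) ∉ S :=
          (hZmem v₀).mp (hv₀ ▸ Finset.mem_singleton_self v₀)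
        have hnonfull : ∀ v, v ≠ v₀ → ∃ w, (v, w) ∈ S := by
          intro v hv
          by_contra hc
          push_neg at hc
          have : v ∈ Z := (hZmem v).mpr hc
          rw [hv₀, Finset.mem_singleton] at this
          exact hv this
        have hfib := fiber_unique hn S hlt v₀ hv₀full hnonfull
        obtain ⟨v', hv'adj⟩ := exists_adj hT.isConnected (by omega) v₀
        obtain ⟨w₀, hw₀S, hw₀uniq⟩ := hfib v' (T.ne_of_adj hv'adj).symm
        have hstarprop : ∀ w w', T'.Adj w w' → w = w₀ ∨ w' = w₀ := by
          intro w w' hww'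
          by_contra hc
          push_neg at hc
          refine four_cycle S hac hv'adj hww' (hv₀full w) (hv₀full w') ?_ ?_
          · intro hmem; exact hc.1 (hw₀uniq w hmem)
          · intro hmem; exact hc.2 (hw₀uniq w' hmem)
        obtain ⟨iso⟩ := star_iso hn' (by omega) w₀
          (star_center hT'.isConnected w₀ hstarprop)
        exact hstar'.false iso
      · -- exactly one full column: T must be a star
        have hz'1 : Z'.card ≤ 1 := by have := h2 (by omega); omega
        have hz' : Z'.card = 1 := by omega
        obtain ⟨w₀, hw₀⟩ := Finset.card_eq_one.mp hz'
        have hw₀full : ∀ v, (v, w₀) ∉ S :=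
          (hZ'mem w₀).mp (hw₀ ▸ Finset.mem_singleton_self w₀)
        have hw₀full' : ∀ v, (w₀, v) ∉ Sw := fun v h => hw₀full v ((hSwmem w₀ v).mp h)
        have hnonfull : ∀ w, w ≠ w₀ → ∃ v, (w, v) ∈ Sw := by
          intro w hw
          by_contra hc
          push_neg at hc
          have : w ∈ Z' := (hZ'mem w).mpr (fun v hv => hc v ((hSwmem w v).mpr hv))
          rw [hw₀, Finset.mem_singleton] at this
          exact hw this
        have hfib := fiber_unique hn' Sw (hSwcard ▸ hlt) w₀ hw₀full' hnonfull
        obtain ⟨w', hw'adj⟩ := exists_adj hT'.isConnected (by omega) w₀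
        obtain ⟨v₀, hv₀S, hv₀uniq⟩ := hfib w' (T'.ne_of_adj hw'adj).symm
        have hstarprop : ∀ v v', T.Adj v v' → v = v₀ ∨ v' = v₀ := by
          intro v v' hvv'
          by_contra hc
          push_neg at hc
          refine four_cycle S hac hvv' hw'adj (hw₀full v) ?_ (hw₀full v') ?_
          · intro hmem; exact hc.1 (hv₀uniq v ((hSwmem w' v).mpr hmem))
          · intro hmem; exact hc.2 (hv₀uniq v' ((hSwmem w' v').mpr hmem))
        obtain ⟨iso⟩ := star_iso hn (by omega) v₀
          (star_center hT.isConnected v₀ hstarprop)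
        exact hstar.false iso
  -- conclude via the definition of the decycling number
  have hne : {k | ∃ S : Finset (V × W), S.card = k ∧
      ((T.boxProd T').induce ((↑S : Set (V × W))ᶜ)).IsAcyclic}.Nonempty := by
    refine ⟨Finset.univ.card, Finset.univ, rfl, ?_⟩
    intro v c
    exact absurd v.2 (by simp)
  refine le_csInf hne ?_
  rintro k ⟨S, rfl, hac⟩
  exact key S hac
end

section
/- If T and T' are trees of respective orders n and n' with 2 ≤ n < n', then ∇(T □ T') = n − 1 if and only if T' is isomorphic to the star S_{n'} (with T arbitrary). -/
open SimpleGraph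

namespace DecyclingAux
open SimpleGraph Walk

set_option linter.unusedSectionVars false

section DistLemmas

variable {α : Type*} [DecidableEq α] {G : SimpleGraph α}

lemma length_eq_dist_of_acyclic (hG : G.IsAcyclic) {u v : α}
    {p : G.Walk u v} (hp : p.IsPath) : p.length = G.dist u v := by
  obtain ⟨q, hq, hql⟩ := (p.reachable).exists_path_of_dist
  have : (⟨p, hp⟩ : G.Path u v) = ⟨q, hq⟩ := hG.path_unique _ _
  rw [show p = q from congrArg Subtype.val this, hql]

lemma dist_add_dist_of_mem_support (hG : G.IsAcyclic) {u v c : α}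
    {p : G.Walk u v} (hp : p.IsPath) (hc : c ∈ p.support) :
    G.dist u c + G.dist c v = G.dist u v := by
  have h1 := hp.takeUntil hc
  have h2 := hp.dropUntil hc
  have hl : (p.takeUntil c hc).length + (p.dropUntil c hc).length = p.length := by
    rw [← Walk.length_append, p.take_spec hc]
  rw [← length_eq_dist_of_acyclic hG hp, ← length_eq_dist_of_acyclic hG h1,
    ← length_eq_dist_of_acyclic hG h2, hl]

lemma eq_of_mem_support_dist_eq (hG : G.IsAcyclic) {u v c₁ c₂ : α}
    {p : G.Walk u v} (hp : p.IsPath) (hc₁ : c₁ ∈ p.support) (hc₂ : c₂ ∈ p.support)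
    (hd : G.dist u c₁ = G.dist u c₂) : c₁ = c₂ := by
  have key : ∀ {a b : α}, G.Reachable a b → G.dist a b = 0 → a = b := by
    intro a b hr h0
    exact hr.dist_eq_zero_iff.mp h0
  have hc₂' : c₂ ∈ (p.takeUntil c₁ hc₁).support ∨ c₂ ∈ (p.dropUntil c₁ hc₁).support := by
    rw [← Walk.mem_support_append_iff, p.take_spec hc₁]; exact hc₂
  have e1 := dist_add_dist_of_mem_support hG hp hc₁
  have e2 := dist_add_dist_of_mem_support hG hp hc₂
  rcases hc₂' with h | h
  · have e3 := dist_add_dist_of_mem_support hG (hp.takeUntil hc₁) h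
    have h0 : G.dist c₂ c₁ = 0 := by omega
    exact (key (Walk.reachable ((p.takeUntil c₁ hc₁).dropUntil c₂ h)) h0).symm
  · have e3 := dist_add_dist_of_mem_support hG (hp.dropUntil hc₁) h
    exact key (Walk.reachable ((p.dropUntil c₁ hc₁).takeUntil c₂ h)) (by omega)

/-- In an acyclic graph, a neighbor's distance from a fixed vertex differs by one. -/
lemma dist_parent_dichotomy (hG : G.IsAcyclic) {z a b : α} (hr : G.Reachable z a)
    (hab : G.Adj a b) : G.dist z b + 1 = G.dist z a ∨ G.dist z a + 1 = G.dist z b := by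
  obtain ⟨p, hp, hl⟩ := hr.exists_path_of_dist
  by_cases hb : b ∈ p.support
  · left
    have e1 := dist_add_dist_of_mem_support hG hp hb
    have : G.dist b a = 1 := dist_eq_one_iff_adj.mpr hab.symm
    omega
  · right
    have hq : (Walk.cons hab.symm p.reverse).IsPath := by
      rw [Walk.cons_isPath_iff]
      exact ⟨hp.reverse, by rwa [Walk.support_reverse, List.mem_reverse]⟩
    have := length_eq_dist_of_acyclic hG hq.reverse
    simp only [Walk.length_reverse, Walk.length_cons] at this
    rw [hl] at this
    omega

/-- Uniqueness of the "parent": two neighbors of `a` strictly closer to `z` coincide. -/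
lemma parent_unique (hG : G.IsAcyclic) {z a b c : α} (hr : G.Reachable z a)
    (hab : G.Adj a b) (hac : G.Adj a c)
    (hb : G.dist z b + 1 = G.dist z a) (hc : G.dist z c + 1 = G.dist z a) : b = c := by
  have hrb : G.Reachable z b := hr.trans hab.reachable
  have hrc : G.Reachable z c := hr.trans hac.reachable
  obtain ⟨pb, hpb, hlb⟩ := hrb.exists_path_of_dist
  obtain ⟨pc, hpc, hlc⟩ := hrc.exists_path_of_dist
  have hbmem : a ∉ pb.support := by
    intro hmem
    have e1 := dist_add_dist_of_mem_support hG hpb hmem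
    have : G.dist a b = 1 := dist_eq_one_iff_adj.mpr hab
    omega
  have hcmem : a ∉ pc.support := by
    intro hmem
    have e1 := dist_add_dist_of_mem_support hG hpc hmem
    have : G.dist a c = 1 := dist_eq_one_iff_adj.mpr hac
    omega
  have hqb : (Walk.cons hab pb.reverse).IsPath := by
    rw [Walk.cons_isPath_iff]
    exact ⟨hpb.reverse, by rwa [Walk.support_reverse, List.mem_reverse]⟩
  have hqc : (Walk.cons hac pc.reverse).IsPath := by
    rw [Walk.cons_isPath_iff]
    exact ⟨hpc.reverse, by rwa [Walk.support_reverse, List.mem_reverse]⟩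
  have := hG.path_unique (⟨Walk.cons hab pb.reverse, hqb⟩ : G.Path a z)
    (⟨Walk.cons hac pc.reverse, hqc⟩ : G.Path a z)
  have hw : Walk.cons hab pb.reverse = Walk.cons hac pc.reverse := congrArg Subtype.val this
  have hsup := congrArg Walk.support hw
  rw [Walk.support_cons, Walk.support_cons, pb.reverse.support_eq_cons,
    pc.reverse.support_eq_cons] at hsup
  simp only [List.cons.injEq] at hsup
  exact hsup.2.1

/-- An acyclic graph on a nonempty finite vertex type has fewer edges than vertices. -/
lemma card_edgeFinset_lt_of_acyclic [Fintype α] [Nonempty α] [Fintype G.edgeSet]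
    (hG : G.IsAcyclic) : G.edgeFinset.card < Fintype.card α := by
  classical
  set z : α → α := fun v => (G.connectedComponentMk v).out with hz_def
  have hz : ∀ v, G.Reachable (z v) v := fun v => ConnectedComponent.exact (Quot.out_eq _)
  have hzadj : ∀ {a b : α}, G.Adj a b → z a = z b := by
    intro a b hab
    show (G.connectedComponentMk a).out = (G.connectedComponentMk b).out
    rw [ConnectedComponent.connectedComponentMk_eq_of_adj hab]
  have hpar : ∀ v : α, z v ≠ v → ∃ u, G.Adj v u ∧ G.dist (z v) u + 1 = G.dist (z v) v := by
    intro v hv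
    have hd : G.dist (z v) v ≠ 0 := by
      rw [dist_ne_zero_iff_ne_and_reachable]; exact ⟨hv, hz v⟩
    obtain ⟨p, hp, hl⟩ := (hz v).exists_path_of_dist
    have hlp : 0 < p.length := by omega
    refine ⟨p.getVert (p.length - 1), ?_, ?_⟩
    · have := p.adj_getVert_succ (i := p.length - 1) (by omega)
      rw [show p.length - 1 + 1 = p.length by omega, p.getVert_length] at this
      exact this.symm
    · set u := p.getVert (p.length - 1) with hu
      have hmem : u ∈ p.support := by
        rw [Walk.mem_support_iff_exists_getVert]
        exact ⟨p.length - 1, rfl, by omega⟩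
      have e1 := dist_add_dist_of_mem_support hG hp hmem
      have hadj : G.Adj u v := by
        have := p.adj_getVert_succ (i := p.length - 1) (by omega)
        rwa [show p.length - 1 + 1 = p.length by omega, p.getVert_length] at this
      have : G.dist u v = 1 := dist_eq_one_iff_adj.mpr hadj
      omega
  -- the map sending each non-root vertex to its parent edge
  set φ : α → Sym2 α := fun v =>
    if h : z v ≠ v then s(v, (hpar v h).choose) else s(v, v) with hφ
  have hsurj : G.edgeFinset ⊆ (Finset.univ.filter (fun v => z v ≠ v)).image φ := by
    intro e he
    rw [mem_edgeFinset] at he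
    induction e with
    | h a b =>
      have hab : G.Adj a b := he
      have hzab : z a = z b := hzadj hab
      -- wlog dist (z a) b = dist (z a) a + 1
      have main : ∀ a b : α, G.Adj a b → G.dist (z a) b + 1 = G.dist (z a) a →
          s(a, b) ∈ (Finset.univ.filter (fun v => z v ≠ v)).image φ := by
        intro a b hab hd
        have hza : z a ≠ a := by
          intro h
          rw [h] at hd
          rw [G.dist_self] at hd
          omega
        refine Finset.mem_image.mpr ⟨a, by simp [hza], ?_⟩
        rw [hφ]
        simp only [hza, ne_eq, not_false_iff, dif_pos]
        have hch := (hpar a hza).choose_spec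
        have : (hpar a hza).choose = b :=
          parent_unique hG (hz a) hch.1 hab (by omega) (by omega)
        rw [this]
      rcases dist_parent_dichotomy hG (hz a) hab with hd | hd
      · -- dist (z a) b + 1 = dist (z a) a : parent of a is b
        exact main a b hab hd
      · -- parent of b is a
        have := main b a hab.symm (by rw [← hzab]; omega)
        rwa [Sym2.eq_swap]
  have h1 : G.edgeFinset.card ≤ (Finset.univ.filter (fun v => z v ≠ v)).card :=
    le_trans (Finset.card_le_card hsurj) (Finset.card_image_le)
  have h2 : (Finset.univ.filter (fun v => z v ≠ v)).card < Fintype.card α := by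
    have hv : ∃ v : α, z v = v := by
      obtain ⟨v⟩ := ‹Nonempty α›
      exact ⟨z v, congrArg Quot.out (Quot.out_eq (G.connectedComponentMk v))⟩
    obtain ⟨v, hv⟩ := hv
    calc (Finset.univ.filter (fun v => z v ≠ v)).card
        ≤ (Finset.univ.erase v).card := by
          apply Finset.card_le_card
          intro w hw
          simp only [Finset.mem_filter] at hw
          apply Finset.mem_erase.mpr
          exact ⟨fun h => hw.2 (h ▸ hv), Finset.mem_univ _⟩
      _ < Fintype.card α := by
          rw [Finset.card_erase_of_mem (Finset.mem_univ _), Finset.card_univ]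
          have : 0 < Fintype.card α := Fintype.card_pos
          omega
  omega

end DistLemmas

variable {α : Type*} {G : SimpleGraph α}

/-- A graph admitting a "level function" where every edge changes the level by exactly one
and each vertex has at most one neighbor on the lower level is acyclic. -/
lemma acyclic_of_level (δ : α → ℕ)
    (h1 : ∀ a b, G.Adj a b → δ a = δ b + 1 ∨ δ b = δ a + 1)
    (h2 : ∀ a b c, G.Adj a b → G.Adj a c → δ b + 1 = δ a → δ c + 1 = δ a → b = c) :
    G.IsAcyclic := by
  intro v c hc
  classical
  -- pick a support vertex of maximal level
  obtain ⟨m, hm, hmax⟩ := Finset.exists_max_image c.support.toFinset δ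
    ⟨v, by simp [c.start_mem_support]⟩
  rw [List.mem_toFinset] at hm
  have hmax' : ∀ y ∈ c.support, δ y ≤ δ m := fun y hy => hmax y (List.mem_toFinset.mpr hy)
  -- rotate the cycle to start at m
  have hc' : (c.rotate m hm).IsCycle := hc.rotate hm
  have hsup : ∀ y ∈ (c.rotate m hm).support, δ y ≤ δ m := by
    intro y hy
    rw [Walk.support_eq_cons] at hy
    rcases List.mem_cons.mp hy with h | h
    · exact h ▸ le_rfl
    · exact hmax' y (List.mem_of_mem_tail ((c.support_rotate m hm).mem_iff.mp h))
  set c' := c.rotate m hm with hcdef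
  clear_value c'
  cases c' with
  | nil => exact hc'.ne_nil rfl
  | cons h p =>
    rename_i a
    -- h : G.Adj m a, p : G.Walk a m
    -- now look at the last edge
    cases hrev : p.reverse with
    | nil =>
      -- p has length 0, cycle has length 1
      have : p.length = 0 := by
        have := congrArg Walk.length hrev
        simpa using this
      have h3 := hc'.three_le_length
      rw [Walk.length_cons] at h3
      omega
    | cons h' q =>
      rename_i y
      -- h' : G.Adj m y
      have hy_mem : y ∈ p.support := by
        have : y ∈ p.reverse.support := by
          rw [hrev]
          simp [Walk.support_cons, q.start_mem_support]
        rwa [Walk.support_reverse, List.mem_reverse] at this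
      have ha_mem : a ∈ p.support := p.start_mem_support
      have hedge_y : s(m, y) ∈ p.edges := by
        have : s(m, y) ∈ p.reverse.edges := by
          rw [hrev, Walk.edges_cons]
          exact List.mem_cons_self
        rwa [Walk.edges_reverse, List.mem_reverse] at this
      have hedge_nodup := hc'.edges_nodup
      rw [Walk.edges_cons] at hedge_nodup
      have hay : a ≠ y := by
        intro hay
        subst hay
        exact (List.nodup_cons.mp hedge_nodup).1 hedge_y
      have hδa : δ a ≤ δ m := hsup a (by simp [Walk.support_cons, ha_mem])
      have hδy : δ y ≤ δ m := hsup y (by simp [Walk.support_cons, hy_mem])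
      have hpa : δ a + 1 = δ m := by
        rcases h1 m a h with h'' | h'' <;> omega
      have hpy : δ y + 1 = δ m := by
        have hadj : G.Adj m y := h'
        rcases h1 m y hadj with h'' | h'' <;> omega
      exact hay (h2 m a y h h' hpa hpy)

/-- If a set `A ⊆ s` carries at least `|A|` edges of `G`, then the graph induced on `s`
has a cycle. -/
lemma not_acyclic_of_many_edges {α : Type*} [DecidableEq α] (G : SimpleGraph α) (s : Set α)
    (A : Finset α) (hA : ↑A ⊆ s) (hA0 : A.Nonempty)
    (E : Finset (Sym2 α)) (hE : ∀ e ∈ E, e ∈ G.edgeSet ∧ ∀ a ∈ e, a ∈ A)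
    (hcard : A.card ≤ E.card) : ¬(G.induce s).IsAcyclic := by
  classical
  intro hac
  have hemb : (G.induce (↑A : Set α)) ↪g (G.induce s) := SimpleGraph.induceHomOfLE G hA
  have hacA : (G.induce (↑A : Set α)).IsAcyclic := by
    intro v c hc
    exact hac (c.map hemb.toHom)
      ((Walk.map_isCycle_iff_of_injective hemb.injective).mpr hc)
  haveI : Fintype (↑A : Set α) := A.finite_toSet.fintype
  haveI : Nonempty (↑A : Set α) := by
    obtain ⟨a, ha⟩ := hA0
    exact ⟨⟨a, ha⟩⟩
  haveI : Fintype (G.induce (↑A : Set α)).edgeSet := Fintype.ofFinite _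
  -- inject E into the edge set of the induced graph
  set F : {e // e ∈ E} → Sym2 (↑A : Set α) := fun x =>
    x.1.pmap Subtype.mk (fun a ha => (hE x.1 x.2).2 a ha) with hF
  have hFinj : Function.Injective F := by
    intro x y hxy
    have := congrArg (Sym2.map Subtype.val) hxy
    rw [hF] at this
    simp only [Sym2.pmap_subtype_map_subtypeVal] at this
    exact Subtype.ext this
  have hFmem : ∀ x, F x ∈ (G.induce (↑A : Set α)).edgeFinset := by
    rintro ⟨e, he⟩
    induction e with
    | h a b =>
      rw [mem_edgeFinset]
      have hadj : G.Adj a b := (hE _ he).1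
      exact hadj
  have h1 : E.card ≤ (G.induce (↑A : Set α)).edgeFinset.card := by
    rw [← Finset.card_attach (s := E)]
    exact Finset.card_le_card_of_injOn F (fun x _ => hFmem x) (hFinj.injOn)
  have h2 := card_edgeFinset_lt_of_acyclic hacA
  have h3 : Fintype.card (↑A : Set α) = A.card := by
    rw [Fintype.card_congr (Equiv.subtypeEquivRight (fun x => Finset.mem_coe))]
    exact Fintype.card_coe A
  omega

/-- The key configuration: two "free" rows `r, x` along the path `p`, and two free
columns `u, u'` along the path `q`, yield a cycle in the complement of `S`. -/
lemma key_s8 {V W : Type*} [DecidableEq V] [DecidableEq W]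
    {T : SimpleGraph V} {T' : SimpleGraph W} {S : Finset (V × W)}
    (hac : ((T.boxProd T').induce ((↑S : Set (V × W))ᶜ)).IsAcyclic)
    {r x : V} {u u' : W} (hrx : r ≠ x) (huu : u ≠ u')
    {q : T.Walk r x} (hq : q.IsPath) {p : T'.Walk u u'} (hp : p.IsPath)
    (h1 : ∀ w ∈ p.support, (r, w) ∉ S ∧ (x, w) ∉ S)
    (h2 : ∀ y ∈ q.support, (y, u) ∉ S ∧ (y, u') ∉ S) : False := by
  classical
  set G := T.boxProd T' with hG
  set P : Finset W := p.support.toFinset with hPdef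
  set Q : Finset V := q.support.toFinset with hQdef
  set A1 : Finset (V × W) := ({r, x} : Finset V) ×ˢ P with hA1
  set A2 : Finset (V × W) := Q ×ˢ ({u, u'} : Finset W) with hA2
  set A : Finset (V × W) := A1 ∪ A2 with hA
  set E1 : Finset (Sym2 (V × W)) :=
    p.edges.toFinset.image (Sym2.map (fun w => (r, w))) with hE1
  set E2 : Finset (Sym2 (V × W)) :=
    p.edges.toFinset.image (Sym2.map (fun w => (x, w))) with hE2
  set E3 : Finset (Sym2 (V × W)) :=
    q.edges.toFinset.image (Sym2.map (fun y => (y, u))) with hE3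
  set E4 : Finset (Sym2 (V × W)) :=
    q.edges.toFinset.image (Sym2.map (fun y => (y, u'))) with hE4
  set E : Finset (Sym2 (V × W)) := E1 ∪ E2 ∪ E3 ∪ E4 with hE
  -- cardinalities
  have hPcard : P.card = p.length + 1 := by
    rw [hPdef, List.toFinset_card_of_nodup hp.support_nodup, Walk.length_support]
  have hQcard : Q.card = q.length + 1 := by
    rw [hQdef, List.toFinset_card_of_nodup hq.support_nodup, Walk.length_support]
  have huP : u ∈ P := by rw [hPdef, List.mem_toFinset]; exact p.start_mem_support
  have huP' : u' ∈ P := by rw [hPdef, List.mem_toFinset]; exact p.end_mem_support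
  have hrQ : r ∈ Q := by rw [hQdef, List.mem_toFinset]; exact q.start_mem_support
  have hxQ : x ∈ Q := by rw [hQdef, List.mem_toFinset]; exact q.end_mem_support
  have hinter : A1 ∩ A2 = ({r, x} : Finset V) ×ˢ ({u, u'} : Finset W) := by
    ext ⟨a, b⟩
    simp only [hA1, hA2, Finset.mem_inter, Finset.mem_product]
    constructor
    · rintro ⟨⟨h₁, _⟩, ⟨_, h₄⟩⟩; exact ⟨h₁, h₄⟩
    · rintro ⟨ha, hb⟩
      refine ⟨⟨ha, ?_⟩, ⟨?_, hb⟩⟩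
      · rcases Finset.mem_insert.mp hb with h | h
        · rw [h]; exact huP
        · rw [Finset.mem_singleton.mp h]; exact huP'
      · rcases Finset.mem_insert.mp ha with h | h
        · rw [h]; exact hrQ
        · rw [Finset.mem_singleton.mp h]; exact hxQ
  have hcard2 : ({r, x} : Finset V).card = 2 := Finset.card_pair hrx
  have hcard2' : ({u, u'} : Finset W).card = 2 := Finset.card_pair huu
  have hAcard : A.card = 2 * p.length + 2 * q.length := by
    have := Finset.card_union_add_card_inter A1 A2
    rw [hinter] at this
    have e1 : A1.card = 2 * (p.length + 1) := by
      rw [hA1, Finset.card_product, hcard2, hPcard]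
    have e2 : A2.card = 2 * (q.length + 1) := by
      rw [hA2, Finset.card_product, hcard2', hQcard]; ring
    have e3 : (({r, x} : Finset V) ×ˢ ({u, u'} : Finset W)).card = 4 := by
      rw [Finset.card_product, hcard2, hcard2']
    rw [← hA] at this
    omega
  -- each family's elements
  have memE1 : ∀ e ∈ E1, ∀ z ∈ e, z.1 = r := by
    intro e he z hz
    rw [hE1, Finset.mem_image] at he
    obtain ⟨e0, _, rfl⟩ := he
    obtain ⟨w, _, rfl⟩ := Sym2.mem_map.mp hz
    rfl
  have memE2 : ∀ e ∈ E2, ∀ z ∈ e, z.1 = x := by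
    intro e he z hz
    rw [hE2, Finset.mem_image] at he
    obtain ⟨e0, _, rfl⟩ := he
    obtain ⟨w, _, rfl⟩ := Sym2.mem_map.mp hz
    rfl
  have memE3 : ∀ e ∈ E3, ∀ z ∈ e, z.2 = u := by
    intro e he z hz
    rw [hE3, Finset.mem_image] at he
    obtain ⟨e0, _, rfl⟩ := he
    obtain ⟨w, _, rfl⟩ := Sym2.mem_map.mp hz
    rfl
  have memE4 : ∀ e ∈ E4, ∀ z ∈ e, z.2 = u' := by
    intro e he z hz
    rw [hE4, Finset.mem_image] at he
    obtain ⟨e0, _, rfl⟩ := he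
    obtain ⟨w, _, rfl⟩ := Sym2.mem_map.mp hz
    rfl
  -- elements of row families have two distinct columns
  have colE1 : ∀ e ∈ E1 ∪ E2, ∃ z ∈ e, ∃ z' ∈ e, z.2 ≠ z'.2 := by
    intro e he
    have : ∃ e0 ∈ p.edges.toFinset, (Sym2.map (fun w => (r, w)) e0 = e) ∨
        (Sym2.map (fun w => (x, w)) e0 = e) := by
      rcases Finset.mem_union.mp he with h | h
      · rw [hE1, Finset.mem_image] at h
        obtain ⟨e0, h0, rfl⟩ := h
        exact ⟨e0, h0, Or.inl rfl⟩
      · rw [hE2, Finset.mem_image] at h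
        obtain ⟨e0, h0, rfl⟩ := h
        exact ⟨e0, h0, Or.inr rfl⟩
    obtain ⟨e0, h0, hcase⟩ := this
    rw [List.mem_toFinset] at h0
    induction e0 with
    | h w w' =>
      have hadj : T'.Adj w w' := p.adj_of_mem_edges h0
      rcases hcase with h | h <;> rw [← h] <;>
        exact ⟨_, Sym2.mem_map.mpr ⟨w, Sym2.mem_mk_left _ _, rfl⟩,
          _, Sym2.mem_map.mpr ⟨w', Sym2.mem_mk_right _ _, rfl⟩, hadj.ne⟩
  -- disjointness
  have d12 : Disjoint E1 E2 := by
    rw [Finset.disjoint_left]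
    intro e he1 he2
    obtain ⟨z, hz, _, _, _⟩ := colE1 e (Finset.mem_union_left _ he1)
    exact hrx ((memE1 e he1 z hz).symm.trans (memE2 e he2 z hz))
  have d34 : Disjoint E3 E4 := by
    rw [Finset.disjoint_left]
    intro e he3 he4
    rw [hE3, Finset.mem_image] at he3
    obtain ⟨e0, _, rfl⟩ := he3
    induction e0 with
    | h y y' =>
      have hz : ((y, u) : V × W) ∈ Sym2.map (fun y => (y, u)) s(y, y') :=
        Sym2.mem_map.mpr ⟨y, Sym2.mem_mk_left _ _, rfl⟩
      have := memE4 _ he4 _ hz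
      exact huu this
  have drc : Disjoint (E1 ∪ E2) (E3 ∪ E4) := by
    rw [Finset.disjoint_left]
    intro e he12 he34
    obtain ⟨z, hz, z', hz', hne⟩ := colE1 e he12
    rcases Finset.mem_union.mp he34 with h | h
    · exact hne ((memE3 e h z hz).trans (memE3 e h z' hz').symm)
    · exact hne ((memE4 e h z hz).trans (memE4 e h z' hz').symm)
  -- cardinality of E
  have himg : ∀ (f : W → V × W), Function.Injective f →
      (p.edges.toFinset.image (Sym2.map f)).card = p.length := by
    intro f hf
    rw [Finset.card_image_of_injective _ (Sym2.map.injective hf),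
      List.toFinset_card_of_nodup hp.isTrail.edges_nodup, Walk.length_edges]
  have himg' : ∀ (f : V → V × W), Function.Injective f →
      (q.edges.toFinset.image (Sym2.map f)).card = q.length := by
    intro f hf
    rw [Finset.card_image_of_injective _ (Sym2.map.injective hf),
      List.toFinset_card_of_nodup hq.isTrail.edges_nodup, Walk.length_edges]
  have hinj1 : Function.Injective (fun w : W => ((r, w) : V × W)) := by
    intro a b h; simpa using h
  have hinj2 : Function.Injective (fun w : W => ((x, w) : V × W)) := by
    intro a b h; simpa using h
  have hinj3 : Function.Injective (fun y : V => ((y, u) : V × W)) := by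
    intro a b h; simpa using h
  have hinj4 : Function.Injective (fun y : V => ((y, u') : V × W)) := by
    intro a b h; simpa using h
  have hEcard : E.card = 2 * p.length + 2 * q.length := by
    have hEeq : E = (E1 ∪ E2) ∪ (E3 ∪ E4) := by rw [hE, Finset.union_assoc]
    rw [hEeq, Finset.card_union_of_disjoint drc, Finset.card_union_of_disjoint d12,
      Finset.card_union_of_disjoint d34, himg _ hinj1, himg _ hinj2,
      himg' _ hinj3, himg' _ hinj4]
    ring
  have hmemA1 : ∀ a ∈ ({r, x} : Finset V), ∀ b ∈ p.support, (a, b) ∈ A := by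
    intro a ha b hb
    refine Finset.mem_union_left _ (Finset.mem_product.mpr ⟨ha, ?_⟩)
    rw [hPdef, List.mem_toFinset]; exact hb
  have hmemA2 : ∀ a ∈ q.support, ∀ b ∈ ({u, u'} : Finset W), (a, b) ∈ A := by
    intro a ha b hb
    refine Finset.mem_union_right _ (Finset.mem_product.mpr ⟨?_, hb⟩)
    rw [hQdef, List.mem_toFinset]; exact ha
  have hEmem : ∀ e ∈ E, e ∈ G.edgeSet ∧ ∀ a ∈ e, a ∈ A := by
    intro e he
    simp only [hE, Finset.mem_union] at he
    have hrow : ∀ a ∈ ({r, x} : Finset V), ∀ e0 ∈ p.edges,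
        (Sym2.map (fun w => (a, w)) e0) ∈ G.edgeSet ∧
        ∀ z ∈ (Sym2.map (fun w => (a, w)) e0), z ∈ A := by
      intro a ha e0 h0
      induction e0 with
      | h w w' =>
        have hadj : T'.Adj w w' := p.adj_of_mem_edges h0
        rw [Sym2.map_pair_eq]
        constructor
        · rw [SimpleGraph.mem_edgeSet]
          exact (boxProd_adj).mpr (Or.inr ⟨hadj, rfl⟩)
        · intro z hz
          rcases Sym2.mem_iff.mp hz with h | h <;> rw [h]
          · exact hmemA1 a ha w (p.fst_mem_support_of_mem_edges h0)
          · exact hmemA1 a ha w' (p.snd_mem_support_of_mem_edges h0)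
    have hcol : ∀ b ∈ ({u, u'} : Finset W), ∀ e0 ∈ q.edges,
        (Sym2.map (fun y => (y, b)) e0) ∈ G.edgeSet ∧
        ∀ z ∈ (Sym2.map (fun y => (y, b)) e0), z ∈ A := by
      intro b hb e0 h0
      induction e0 with
      | h y y' =>
        have hadj : T.Adj y y' := q.adj_of_mem_edges h0
        rw [Sym2.map_pair_eq]
        constructor
        · rw [SimpleGraph.mem_edgeSet]
          exact (boxProd_adj).mpr (Or.inl ⟨hadj, rfl⟩)
        · intro z hz
          rcases Sym2.mem_iff.mp hz with h | h <;> rw [h]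
          · exact hmemA2 y (q.fst_mem_support_of_mem_edges h0) b hb
          · exact hmemA2 y' (q.snd_mem_support_of_mem_edges h0) b hb
    rcases he with ((he | he) | he) | he
    · rw [hE1, Finset.mem_image] at he
      obtain ⟨e0, h0, rfl⟩ := he
      rw [List.mem_toFinset] at h0
      exact hrow r (Finset.mem_insert_self _ _) e0 h0
    · rw [hE2, Finset.mem_image] at he
      obtain ⟨e0, h0, rfl⟩ := he
      rw [List.mem_toFinset] at h0
      exact hrow x (by simp) e0 h0
    · rw [hE3, Finset.mem_image] at he
      obtain ⟨e0, h0, rfl⟩ := he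
      rw [List.mem_toFinset] at h0
      exact hcol u (Finset.mem_insert_self _ _) e0 h0
    · rw [hE4, Finset.mem_image] at he
      obtain ⟨e0, h0, rfl⟩ := he
      rw [List.mem_toFinset] at h0
      exact hcol u' (by simp) e0 h0
  have hAsub : ↑A ⊆ ((↑S : Set (V × W))ᶜ) := by
    intro z hz
    rw [Finset.mem_coe] at hz
    obtain ⟨a, b⟩ := z
    simp only [Set.mem_compl_iff, Finset.mem_coe]
    intro hzS'
    rcases Finset.mem_union.mp hz with h | h
    · obtain ⟨ha, hb⟩ := Finset.mem_product.mp h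
      rw [hPdef, List.mem_toFinset] at hb
      rcases Finset.mem_insert.mp ha with h' | h'
      · have h'' : a = r := h'
        exact (h1 b hb).1 (by rwa [h''] at hzS')
      · have h'' : a = x := Finset.mem_singleton.mp h'
        exact (h1 b hb).2 (by rwa [h''] at hzS')
    · obtain ⟨ha, hb⟩ := Finset.mem_product.mp h
      rw [hQdef, List.mem_toFinset] at ha
      rcases Finset.mem_insert.mp hb with h' | h'
      · have h'' : b = u := h'
        exact (h2 a ha).1 (by rwa [h''] at hzS')
      · have h'' : b = u' := Finset.mem_singleton.mp h'
        exact (h2 a ha).2 (by rwa [h''] at hzS')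
  have hA0 : A.Nonempty := ⟨(r, u), hmemA1 r (Finset.mem_insert_self _ _) u p.start_mem_support⟩
  exact not_acyclic_of_many_edges G _ A hAsub hA0 E hEmem (by omega) hac

lemma star_of_card_eq {V W : Type*} [Fintype V] [Fintype W] [DecidableEq V] [DecidableEq W]
    {T : SimpleGraph V} {T' : SimpleGraph W} {n n' : ℕ}
    (hn : Fintype.card V = n) (hn' : Fintype.card W = n') (h2 : 2 ≤ n) (hnn' : n < n')
    (hT : T.IsTree) (hT' : T'.IsTree) {S : Finset (V × W)} (hScard : S.card = n - 1)
    (hac : ((T.boxProd T').induce ((↑S : Set (V × W))ᶜ)).IsAcyclic) :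
    ∃ m : W, ∀ a b, T'.Adj a b → a = m ∨ b = m := by
  classical
  have hTc := hT.isConnected
  have hT'c := hT'.isConnected
  have hT'a := hT'.IsAcyclic
  have hV2 : 1 < Fintype.card V := by omega
  -- a free row r
  obtain ⟨r, hr⟩ : ∃ r : V, r ∉ S.image Prod.fst := by
    by_contra hno
    push_neg at hno
    have : (Finset.univ : Finset V) ⊆ S.image Prod.fst := fun v _ => hno v
    have h1 := Finset.card_le_card this
    have h2' := Finset.card_image_le (s := S) (f := Prod.fst)
    rw [Finset.card_univ, hn] at h1
    omega
  have hfr : ∀ w, (r, w) ∉ S := by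
    intro w hw
    exact hr (Finset.mem_image.mpr ⟨(r, w), hw, rfl⟩)
  -- free columns
  set hitC : Finset W := S.image Prod.snd with hhitC
  set freeC : Finset W := Finset.univ \ hitC with hfreeC
  have hfree_no : ∀ w ∈ freeC, ∀ v, (v, w) ∉ S := by
    intro w hw v hvw
    rw [hfreeC, Finset.mem_sdiff] at hw
    exact hw.2 (Finset.mem_image.mpr ⟨(v, w), hvw, rfl⟩)
  have hhit_card : hitC.card ≤ n - 1 := hScard ▸ Finset.card_image_le
  have hfree_card : 2 ≤ freeC.card := by
    rw [hfreeC, Finset.card_sdiff_of_subset (Finset.subset_univ _), Finset.card_univ, hn']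
    omega
  -- adjacent free columns are impossible
  have hadjfree : ∀ {w w' : W}, T'.Adj w w' → (∀ v, (v, w) ∉ S) → (∀ v, (v, w') ∉ S) → False := by
    intro w w' hadj hf hf'
    obtain ⟨r0, _, x0, _, hr0x0⟩ := Finset.one_lt_card.mp
      (show 1 < (Finset.univ : Finset V).card by rw [Finset.card_univ]; omega)
    obtain ⟨q, hqp, _⟩ := hTc.exists_path_of_dist r0 x0
    have hpp : (Walk.cons hadj Walk.nil).IsPath := by simp [hadj.ne]
    refine key_s8 hac hr0x0 hadj.ne hqp hpp ?_ (fun y _ => ⟨hf y, hf' y⟩)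
    intro z hz
    simp only [Walk.support_cons, Walk.support_nil, List.mem_cons, List.mem_singleton,
      List.not_mem_nil, or_false] at hz
    rcases hz with h | h <;> subst h
    · exact ⟨hf r0, hf x0⟩
    · exact ⟨hf' r0, hf' x0⟩
  -- claim A
  have hclaim : ∀ u u' : W, u ∈ freeC → u' ∈ freeC → u ≠ u' →
      ∀ (pp : T'.Walk u u'), pp.IsPath →
      (∀ s ∈ S, s.1 ≠ r ∧ s.2 ∈ pp.support) ∧
      (∀ s ∈ S, ∀ t ∈ S, s.1 = t.1 → s = t) := by
    intro u u' hu hu' huu pp hpp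
    have hfu := hfree_no u hu
    have hfu' := hfree_no u' hu'
    have hx : ∀ x ∈ Finset.univ.erase r, ∃ w, w ∈ pp.support ∧ (x, w) ∈ S := by
      intro x hx
      have hxr : x ≠ r := (Finset.mem_erase.mp hx).1
      by_contra hno
      push_neg at hno
      obtain ⟨q, hqp, _⟩ := hTc.exists_path_of_dist r x
      exact key_s8 hac (Ne.symm hxr) huu hqp hpp
        (fun w hw => ⟨hfr w, fun hmem => hno w hw hmem⟩)
        (fun y _ => ⟨hfu y, hfu' y⟩)
    choose f hf1 hf2 using hx
    set F : V → V × W := fun x =>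
      if hx : x ∈ Finset.univ.erase r then (x, f x hx) else (x, u) with hF
    have hFfst : ∀ x, (F x).1 = x := by
      intro x
      rw [hF]
      by_cases hx : x ∈ Finset.univ.erase r <;> simp [hx]
    have hinj : Set.InjOn F ↑(Finset.univ.erase r) := by
      intro a _ b _ hab
      rw [← hFfst a, hab, hFfst]
    have himg : (Finset.univ.erase r).image F ⊆ S := by
      intro z hz
      obtain ⟨x, hx, rfl⟩ := Finset.mem_image.mp hz
      rw [hF]
      simp only [hx, dif_pos]
      exact hf2 x hx
    have hecard : (Finset.univ.erase r).card = n - 1 := by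
      rw [Finset.card_erase_of_mem (Finset.mem_univ _), Finset.card_univ, hn]
    have himgcard : ((Finset.univ.erase r).image F).card = n - 1 := by
      rw [Finset.card_image_of_injOn hinj, hecard]
    have hSeq : (Finset.univ.erase r).image F = S :=
      Finset.eq_of_subset_of_card_le himg (by omega)
    have hrep : ∀ s ∈ S, ∃ hx : s.1 ∈ Finset.univ.erase r, s = (s.1, f s.1 hx) := by
      intro s hs
      rw [← hSeq] at hs
      obtain ⟨x, hx, hFx⟩ := Finset.mem_image.mp hs
      have hx1 : s.1 = x := by rw [← hFx, hFfst]
      subst hx1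
      refine ⟨hx, ?_⟩
      rw [hF] at hFx
      simp only [hx, dif_pos] at hFx
      exact hFx.symm
    constructor
    · intro s hs
      obtain ⟨hx, hsx⟩ := hrep s hs
      constructor
      · exact (Finset.mem_erase.mp hx).1
      · have h22 : s.2 = f s.1 hx := congrArg Prod.snd hsx
        rw [h22]
        exact hf1 s.1 hx
    · intro s hs t ht hst
      obtain ⟨hxs, hss⟩ := hrep s hs
      obtain ⟨hxt, htt⟩ := hrep t ht
      rw [hss, htt]
      simp only [Prod.mk.injEq]
      exact ⟨hst, by congr 1⟩
  -- pick two free columns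
  obtain ⟨u0, hu0, u1, hu1, hu01⟩ := Finset.one_lt_card.mp (by omega : 1 < freeC.card)
  obtain ⟨p01, hp01, _⟩ := hT'c.exists_path_of_dist u0 u1
  obtain ⟨hstar01, hrowinj⟩ := hclaim u0 u1 hu0 hu1 hu01 p01 hp01
  by_cases hone : ∀ s ∈ S, ∀ t ∈ S, s.2 = t.2
  · -- all of S in a single column
    have hSne : S.Nonempty := by
      rw [← Finset.card_pos, hScard]; omega
    obtain ⟨s0, hs0⟩ := hSne
    refine ⟨s0.2, ?_⟩
    intro a b hadj
    by_contra hno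
    push_neg at hno
    refine hadjfree hadj ?_ ?_
    · intro v hv
      exact hno.1 (hone _ hv _ hs0)
    · intro v hv
      exact hno.2 (hone _ hv _ hs0)
  · push_neg at hone
    obtain ⟨s1, hs1, s2, hs2, hs12⟩ := hone
    exfalso
    -- free columns are exactly two
    have hfree2 : freeC.card = 2 := by
      by_contra hf3
      have h3 : 3 ≤ freeC.card := by omega
      have hthird : ∃ u2 ∈ freeC, u2 ≠ u0 ∧ u2 ≠ u1 := by
        by_contra hno
        push_neg at hno
        have hsub : freeC ⊆ {u0, u1} := by
          intro z hz
          rcases eq_or_ne z u0 with h | h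
          · exact Finset.mem_insert.mpr (Or.inl h)
          · rcases eq_or_ne z u1 with h' | h'
            · exact Finset.mem_insert.mpr (Or.inr (Finset.mem_singleton.mpr h'))
            · exact absurd h' (not_not.mpr (hno z hz h))
        have := Finset.card_le_card hsub
        rw [Finset.card_pair hu01] at this
        omega
      obtain ⟨u2, hu2, h20, h21⟩ := hthird
      obtain ⟨p02, hp02, _⟩ := hT'c.exists_path_of_dist u0 u2
      obtain ⟨p12, hp12, _⟩ := hT'c.exists_path_of_dist u1 u2
      obtain ⟨h02, _⟩ := hclaim u0 u2 hu0 hu2 (Ne.symm h20) p02 hp02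
      obtain ⟨h12s, _⟩ := hclaim u1 u2 hu1 hu2 (Ne.symm h21) p12 hp12
      have hc1 := (hstar01 s1 hs1).2
      have hc2m := (hstar01 s2 hs2).2
      have hc1' := (h02 s1 hs1).2
      have hc2' := (h02 s2 hs2).2
      have hc1'' := (h12s s1 hs1).2
      have hc2'' := (h12s s2 hs2).2
      have e1 := dist_add_dist_of_mem_support hT'a hp01 hc1
      have e2 := dist_add_dist_of_mem_support hT'a hp02 hc1'
      have e3 := dist_add_dist_of_mem_support hT'a hp12 hc1''
      have e4 := dist_add_dist_of_mem_support hT'a hp01 hc2m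
      have e5 := dist_add_dist_of_mem_support hT'a hp02 hc2'
      have e6 := dist_add_dist_of_mem_support hT'a hp12 hc2''
      have hkey : T'.dist u0 s1.2 = T'.dist u0 s2.2 := by
        have c1 : T'.dist u1 s1.2 = T'.dist s1.2 u1 := SimpleGraph.dist_comm
        have c2 : T'.dist u1 s2.2 = T'.dist s2.2 u1 := SimpleGraph.dist_comm
        omega
      exact hs12 (eq_of_mem_support_dist_eq hT'a hp01 hc1 hc2m hkey)
    have hfreeq : freeC = {u0, u1} := by
      refine (Finset.eq_of_subset_of_card_le ?_ ?_).symm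
      · intro z hz
        rcases Finset.mem_insert.mp hz with h | h
        · rw [h]; exact hu0
        · rw [Finset.mem_singleton.mp h]; exact hu1
      · rw [Finset.card_pair hu01]; omega
    have hhit_le : hitC.card ≤ n' := by
      have := Finset.card_le_univ hitC
      omega

    have hfreecount : freeC.card = n' - hitC.card := by
      rw [hfreeC, Finset.card_sdiff_of_subset (Finset.subset_univ _), Finset.card_univ, hn']
    have hhit_eq : hitC.card = n' - 2 := by omega
    have hn'1 : n' = n + 1 := by omega
    have hhitS : hitC.card = S.card := by omega
    have hcolinj : ∀ s ∈ S, ∀ t ∈ S, s.2 = t.2 → s = t := by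
      have hinj : Set.InjOn (Prod.snd : V × W → W) ↑S := Finset.card_image_iff.mp hhitS
      intro s hs t ht hst
      exact hinj (Finset.mem_coe.mpr hs) (Finset.mem_coe.mpr ht) hst
    have hn3 : 3 ≤ n := by
      have : 1 < S.card := Finset.one_lt_card.mpr
        ⟨s1, hs1, s2, hs2, fun h => hs12 (by rw [h])⟩
      omega
    have hsupuniv : ∀ w : W, w ∈ p01.support := by
      intro w
      by_cases hw : w ∈ hitC
      · rw [hhitC] at hw
        obtain ⟨s, hsS, hsnd⟩ := Finset.mem_image.mp hw
        rw [← hsnd]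
        exact (hstar01 s hsS).2
      · have hwf : w ∈ freeC := by
          rw [hfreeC, Finset.mem_sdiff]; exact ⟨Finset.mem_univ _, hw⟩
        rw [hfreeq] at hwf
        rcases Finset.mem_insert.mp hwf with h | h
        · rw [h]; exact p01.start_mem_support
        · rw [Finset.mem_singleton.mp h]; exact p01.end_mem_support
    have hlen : p01.length = n := by
      have hsub : (Finset.univ : Finset W) ⊆ p01.support.toFinset :=
        fun w _ => List.mem_toFinset.mpr (hsupuniv w)
      have hge := Finset.card_le_card hsub
      have hle := Finset.card_le_univ p01.support.toFinset
      rw [Finset.card_univ, hn', List.toFinset_card_of_nodup hp01.support_nodup,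
        Walk.length_support] at hge
      rw [List.toFinset_card_of_nodup hp01.support_nodup, Walk.length_support] at hle
      omega
    set c2 : W := p01.getVert 1 with hc2def
    set cp : W := p01.getVert (p01.length - 1) with hcpdef
    have hadj0 : T'.Adj u0 c2 := by
      have := p01.adj_getVert_succ (i := 0) (by omega)
      rwa [p01.getVert_zero] at this
    have hadjp : T'.Adj cp u1 := by
      have := p01.adj_getVert_succ (i := p01.length - 1) (by omega)
      rwa [show p01.length - 1 + 1 = p01.length by omega, p01.getVert_length] at this
    have hc2mem : c2 ∈ p01.support := hsupuniv c2
    have hcpmem : cp ∈ p01.support := hsupuniv cp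
    have hd2 : T'.dist u0 c2 = 1 := dist_eq_one_iff_adj.mpr hadj0
    have hdp : T'.dist u0 cp = n - 1 := by
      have e := dist_add_dist_of_mem_support hT'a hp01 hcpmem
      have hone' : T'.dist cp u1 = 1 := dist_eq_one_iff_adj.mpr hadjp
      have h0 : T'.dist u0 u1 = n := by
        rw [← length_eq_dist_of_acyclic hT'a hp01, hlen]
      omega
    have hc2cp : c2 ≠ cp := by
      intro h; rw [h] at hd2; rw [hd2] at hdp; omega
    have hc2u0 : c2 ≠ u0 := hadj0.ne'
    have hc2u1 : c2 ≠ u1 := by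
      intro h
      exact hadjfree (h ▸ hadj0) (hfree_no u0 hu0) (hfree_no u1 hu1)
    have hcpu1 : cp ≠ u1 := hadjp.ne
    have hcpu0 : cp ≠ u0 := by
      intro h
      exact hadjfree (h ▸ hadjp) (hfree_no u0 hu0) (hfree_no u1 hu1)
    have hgethit : ∀ w : W, w ≠ u0 → w ≠ u1 → ∃ s ∈ S, s.2 = w := by
      intro w h0 h1
      have hw : w ∉ freeC := by
        rw [hfreeq]
        simp [h0, h1]
      have hwh : w ∈ hitC := by
        by_contra hcon
        exact hw (by rw [hfreeC, Finset.mem_sdiff]; exact ⟨Finset.mem_univ _, hcon⟩)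
      rw [hhitC] at hwh
      obtain ⟨s, hs, hsnd⟩ := Finset.mem_image.mp hwh
      exact ⟨s, hs, hsnd⟩
    obtain ⟨sa, hsa, hsac⟩ := hgethit c2 hc2u0 hc2u1
    obtain ⟨sb, hsb, hsbc⟩ := hgethit cp hcpu0 hcpu1
    have hab : sa.1 ≠ sb.1 := by
      intro h
      have heq := hrowinj sa hsa sb hsb h
      exact hc2cp (by rw [← hsac, heq, hsbc])
    have hinc : ∀ (w c : W) (av : V), T'.Adj w c → (∀ v, (v, w) ∉ S) →
        (∀ v, (v, c) ∈ S → v = av) → ∀ e ∈ T.edgeFinset, av ∈ e := by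
      intro w c av hadj hfw hcol e
      induction e with
      | h y z =>
        intro he
        by_contra hno
        rw [mem_edgeFinset, SimpleGraph.mem_edgeSet] at he
        have hy : y ≠ av := fun h => hno (h ▸ Sym2.mem_mk_left y z)
        have hz : z ≠ av := fun h => hno (h ▸ Sym2.mem_mk_right y z)
        have hqp : (Walk.cons he Walk.nil).IsPath := by simp [he.ne]
        have hpp : (Walk.cons hadj Walk.nil).IsPath := by simp [hadj.ne]
        refine key_s8 hac he.ne hadj.ne hqp hpp ?_ ?_
        · intro ww hww
          simp only [Walk.support_cons, Walk.support_nil, List.mem_cons,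
            List.mem_singleton, List.not_mem_nil, or_false] at hww
          rcases hww with h | h
          · rw [h]; exact ⟨hfw y, hfw z⟩
          · rw [h]
            exact ⟨fun hm => hy (hcol y hm), fun hm => hz (hcol z hm)⟩
        · intro v hv
          simp only [Walk.support_cons, Walk.support_nil, List.mem_cons,
            List.mem_singleton, List.not_mem_nil, or_false] at hv
          refine ⟨hfw v, fun hm => ?_⟩
          have hva := hcol v hm
          rcases hv with h | h
          · exact hy (by rw [← h]; exact hva)
          · exact hz (by rw [← h]; exact hva)
    have hcola : ∀ v, (v, c2) ∈ S → v = sa.1 := by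
      intro v hm
      have := hcolinj (v, c2) hm sa hsa (by rw [hsac])
      exact congrArg Prod.fst this
    have hcolb : ∀ v, (v, cp) ∈ S → v = sb.1 := by
      intro v hm
      have := hcolinj (v, cp) hm sb hsb (by rw [hsbc])
      exact congrArg Prod.fst this
    have hedgea := hinc u0 c2 sa.1 hadj0 (hfree_no u0 hu0) hcola
    have hedgeb := hinc u1 cp sb.1 hadjp.symm (hfree_no u1 hu1) hcolb
    have hTedge : T.edgeFinset.card = n - 1 := by
      have := hT.card_edgeFinset
      rw [hn] at this
      omega
    obtain ⟨e1, he1, e2, he2, he12⟩ := Finset.one_lt_card.mp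
      (show 1 < T.edgeFinset.card by omega)
    have heq1 : e1 = s(sa.1, sb.1) :=
      (Sym2.mem_and_mem_iff hab).mp ⟨hedgea e1 he1, hedgeb e1 he1⟩
    have heq2 : e2 = s(sa.1, sb.1) :=
      (Sym2.mem_and_mem_iff hab).mp ⟨hedgea e2 he2, hedgeb e2 he2⟩
    exact he12 (heq1.trans heq2.symm)

/-- From a vertex meeting every edge of a tree, get an isomorphism with the star. -/
lemma iso_star_of_center {W : Type*} [Fintype W] {T' : SimpleGraph W} {n' : ℕ}
    (hn' : Fintype.card W = n') (h3 : 3 ≤ n') (hT' : T'.IsTree) (m : W)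
    (hm : ∀ a b, T'.Adj a b → a = m ∨ b = m) :
    Nonempty (T' ≃g _root_.starGraph n') := by
  classical
  have hadjm : ∀ a, a ≠ m → T'.Adj a m := by
    intro a ha
    obtain ⟨pw, hpw, _⟩ := hT'.isConnected.exists_path_of_dist a m
    have hlen : 0 < pw.length := by
      rcases Nat.eq_zero_or_pos pw.length with h | h
      · exact absurd (pw.eq_of_length_eq_zero h) ha
      · exact h
    have hadj := pw.adj_getVert_succ (i := 0) hlen
    rw [pw.getVert_zero] at hadj
    rcases hm a (pw.getVert 1) hadj with h | h
    · exact absurd h ha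
    · rwa [h] at hadj
  have hAdjIff : ∀ a b, T'.Adj a b ↔ a ≠ b ∧ (a = m ∨ b = m) := by
    intro a b
    constructor
    · intro h; exact ⟨h.ne, hm a b h⟩
    · rintro ⟨hne, h | h⟩
      · subst h
        exact (hadjm b (fun h => hne h.symm)).symm
      · subst h
        exact hadjm a hne
  haveI : NeZero n' := ⟨by omega⟩
  set e0 := Fintype.equivFinOfCardEq hn' with he0
  set e : W ≃ Fin n' := e0.trans (Equiv.swap (e0 m) 0) with he
  have hem : e m = 0 := by
    rw [he]
    simp [Equiv.swap_apply_left]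
  have hval : ∀ a : W, (e a).val = 0 ↔ a = m := by
    intro a
    rw [show ((e a).val = 0 ↔ e a = 0) from by rw [Fin.ext_iff, Fin.val_zero], ← hem]
    exact ⟨fun h => e.injective h, fun h => by rw [h]⟩
  refine ⟨⟨e, ?_⟩⟩
  intro a b
  show (e a ≠ e b ∧ ((e a).val = 0 ∨ (e b).val = 0)) ↔ T'.Adj a b
  rw [hAdjIff a b, hval a, hval b, ne_eq, Equiv.apply_eq_iff_eq, ← ne_eq]

/-- In the product with a star, deleting the centre column except one vertex
leaves an acyclic graph. -/
lemma star_construction {V W : Type*} [Fintype V] [Fintype W] [DecidableEq V] [DecidableEq W]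
    {T : SimpleGraph V} {T' : SimpleGraph W} (hT : T.IsTree)
    (m : W) (hAdjIff : ∀ a b, T'.Adj a b ↔ a ≠ b ∧ (a = m ∨ b = m)) (v0 : V) :
    ((T.boxProd T').induce
      ((↑((Finset.univ.erase v0) ×ˢ ({m} : Finset W)) : Set (V × W))ᶜ)).IsAcyclic := by
  classical
  set S : Finset (V × W) := (Finset.univ.erase v0) ×ˢ ({m} : Finset W) with hS
  have hmemS : ∀ a b, ((a, b) ∈ S ↔ a ≠ v0 ∧ b = m) := by
    intro a b
    rw [hS, Finset.mem_product]
    simp [Finset.mem_erase]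
  have hTc := hT.isConnected
  have hTa := hT.IsAcyclic
  set δ : V × W → ℕ := fun z => if z.2 = m then 0 else T.dist v0 z.1 + 1 with hδ
  have hδcol : ∀ (a : V) (b : W), b ≠ m → δ (a, b) = T.dist v0 a + 1 := by
    intro a b hb
    simp [hδ, hb]
  have hδm : ∀ a : V, δ (a, m) = 0 := by
    intro a
    simp [hδ]
  apply acyclic_of_level (fun z => δ z.val)
  · rintro ⟨⟨a, b⟩, hab⟩ ⟨⟨c, d⟩, hcd⟩ hadj
    have hab' : (a, b) ∉ S := hab
    have hcd' : (c, d) ∉ S := hcd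
    have hGadj : (T.boxProd T').Adj (a, b) (c, d) := hadj
    show δ (a, b) = δ (c, d) + 1 ∨ δ (c, d) = δ (a, b) + 1
    rcases boxProd_adj.mp hGadj with ⟨hTadj, hbd⟩ | ⟨hT'adj, hac'⟩
    · -- column edge
      simp only at hbd
      subst hbd
      by_cases hbm : b = m
      · exfalso
        have ha : a = v0 := by
          by_contra h
          exact hab' ((hmemS a b).mpr ⟨h, hbm⟩)
        have hc : c = v0 := by
          by_contra h
          exact hcd' ((hmemS c b).mpr ⟨h, hbm⟩)
        rw [ha, hc] at hTadj
        exact T.irrefl hTadj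
      · rw [hδcol a b hbm, hδcol c b hbm]
        have hTadj' : T.Adj a c := hTadj
        rcases dist_parent_dichotomy hTa (hTc v0 a) hTadj' with h | h
        · left; omega
        · right; omega
    · -- row edge
      simp only at hac'
      subst hac'
      obtain ⟨hbd, hcase⟩ := (hAdjIff b d).mp hT'adj
      rcases hcase with hbm | hdm
      · subst hbm
        have ha : a = v0 := by
          by_contra h
          exact hab' ((hmemS a b).mpr ⟨h, rfl⟩)
        have hdm : d ≠ b := fun h => hbd h.symm
        right
        rw [hδm a, hδcol a d hdm, ha, T.dist_self]
      · subst hdm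
        have ha : a = v0 := by
          by_contra h
          exact hcd' ((hmemS a d).mpr ⟨h, rfl⟩)
        have hbm : b ≠ d := hbd
        left
        rw [hδm a, hδcol a b hbm, ha, T.dist_self]
  · rintro ⟨⟨a, b⟩, hab⟩ ⟨⟨c, d⟩, hcd⟩ ⟨⟨g, f⟩, hgf⟩ hadj1 hadj2 hd1 hd2
    have hab' : (a, b) ∉ S := hab
    have hcd' : (c, d) ∉ S := hcd
    have hgf' : (g, f) ∉ S := hgf
    have hGadj1 : (T.boxProd T').Adj (a, b) (c, d) := hadj1
    have hGadj2 : (T.boxProd T').Adj (a, b) (g, f) := hadj2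
    have hd1' : δ (c, d) + 1 = δ (a, b) := hd1
    have hd2' : δ (g, f) + 1 = δ (a, b) := hd2
    by_cases hbm : b = m
    · exfalso
      subst hbm
      rw [hδm a] at hd1'
      omega
    · rw [hδcol a b hbm] at hd1' hd2'
      -- characterize each neighbor
      have hchar : ∀ (c' : V) (d' : W), (T.boxProd T').Adj (a, b) (c', d') →
          ((c', d') ∉ S) → δ (c', d') + 1 = δ (a, b) →
          (d' = b ∧ T.Adj a c' ∧ T.dist v0 c' + 1 = T.dist v0 a) ∨
          (c' = a ∧ d' = m ∧ a = v0) := by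
        intro c' d' hGadj hmem hdd
        rcases boxProd_adj.mp hGadj with ⟨hTadj, hbd⟩ | ⟨hT'adj, hac'⟩
        · simp only at hbd
          subst hbd
          left
          rw [hδcol a b hbm] at hdd
          rw [hδcol c' b hbm] at hdd
          exact ⟨rfl, hTadj, by omega⟩
        · simp only at hac'
          subst hac'
          obtain ⟨hbd, hcase⟩ := (hAdjIff b d').mp hT'adj
          rcases hcase with h | h
          · exact absurd h hbm
          · subst h
            right
            have ha : a = v0 := by
              by_contra hh
              exact hmem ((hmemS a d').mpr ⟨hh, rfl⟩)
            exact ⟨rfl, rfl, ha⟩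
      rcases hchar c d hGadj1 hcd' hd1 with ⟨hdb, hTac, hdc⟩ | ⟨hca, hdm, hav⟩ <;>
        rcases hchar g f hGadj2 hgf' hd2 with ⟨hfb, hTag, hdg⟩ | ⟨hga, hfm, hav'⟩
      · -- both column neighbors
        have := parent_unique hTa (hTc v0 a) hTac hTag hdc hdg
        apply Subtype.ext
        simp only [Prod.mk.injEq]
        exact ⟨this, hdb.trans hfb.symm⟩
      · -- col/row : dist v0 a = 0 and positive
        exfalso
        rw [hav'] at hdc
        rw [T.dist_self] at hdc
        omega
      · exfalso
        rw [hav] at hdg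
        rw [T.dist_self] at hdg
        omega
      · apply Subtype.ext
        simp only [Prod.mk.injEq]
        exact ⟨hca.trans hga.symm, hdm.trans hfm.symm⟩


end DecyclingAux

theorem decycling_boxProd_distinct_orders_eq_iff_star
    {V W : Type*} [Fintype V] [Fintype W]
    (T : SimpleGraph V) (T' : SimpleGraph W) (n n' : ℕ)
    (hn : Fintype.card V = n) (hn' : Fintype.card W = n')
    (h2 : 2 ≤ n) (hnn' : n < n')
    (hT : T.IsTree) (hT' : T'.IsTree) :
    decyclingNumber (T.boxProd T') = n - 1 ↔ Nonempty (T' ≃g _root_.starGraph n') := by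
  classical
  have hTc := hT.isConnected
  have hT'c := hT'.isConnected
  haveI : Nonempty V := Fintype.card_pos_iff.mp (by omega)
  haveI : Nonempty W := Fintype.card_pos_iff.mp (by omega)
  have hempty : ((T.boxProd T').induce
      ((↑(Finset.univ : Finset (V × W)) : Set (V × W))ᶜ)).IsAcyclic := by
    intro v
    exact absurd v.2 (by simp)
  have hne : {k | ∃ S : Finset (V × W), S.card = k ∧
      ((T.boxProd T').induce ((↑S : Set (V × W))ᶜ)).IsAcyclic}.Nonempty :=
    ⟨_, Finset.univ, rfl, hempty⟩
  have hLB : ∀ S : Finset (V × W),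
      ((T.boxProd T').induce ((↑S : Set (V × W))ᶜ)).IsAcyclic → n - 1 ≤ S.card := by
    intro S hS
    by_contra hlt
    push_neg at hlt
    have hrows : 2 ≤ (Finset.univ \ S.image Prod.fst).card := by
      have h1 : (S.image Prod.fst).card ≤ S.card := Finset.card_image_le
      rw [Finset.card_sdiff_of_subset (Finset.subset_univ _), Finset.card_univ, hn]
      omega
    obtain ⟨r, hr, x, hx, hrx⟩ := Finset.one_lt_card.mp
      (show 1 < (Finset.univ \ S.image Prod.fst).card by omega)
    have hcols : 2 ≤ (Finset.univ \ S.image Prod.snd).card := by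
      have h1 : (S.image Prod.snd).card ≤ S.card := Finset.card_image_le
      rw [Finset.card_sdiff_of_subset (Finset.subset_univ _), Finset.card_univ, hn']
      omega
    obtain ⟨u, hu, u', hu', huu⟩ := Finset.one_lt_card.mp
      (show 1 < (Finset.univ \ S.image Prod.snd).card by omega)
    have hfr : ∀ w, (r, w) ∉ S := fun w hw =>
      (Finset.mem_sdiff.mp hr).2 (Finset.mem_image.mpr ⟨(r, w), hw, rfl⟩)
    have hfx : ∀ w, (x, w) ∉ S := fun w hw =>
      (Finset.mem_sdiff.mp hx).2 (Finset.mem_image.mpr ⟨(x, w), hw, rfl⟩)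
    have hfu : ∀ v, (v, u) ∉ S := fun v hv =>
      (Finset.mem_sdiff.mp hu).2 (Finset.mem_image.mpr ⟨(v, u), hv, rfl⟩)
    have hfu' : ∀ v, (v, u') ∉ S := fun v hv =>
      (Finset.mem_sdiff.mp hu').2 (Finset.mem_image.mpr ⟨(v, u'), hv, rfl⟩)
    obtain ⟨q, hq, _⟩ := hTc.exists_path_of_dist r x
    obtain ⟨p, hp, _⟩ := hT'c.exists_path_of_dist u u'
    exact DecyclingAux.key_s8 hS hrx huu hq hp (fun w _ => ⟨hfr w, hfx w⟩)
      (fun y _ => ⟨hfu y, hfu' y⟩)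
  constructor
  · intro hdn
    have hdn' : sInf {k | ∃ S : Finset (V × W), S.card = k ∧
        ((T.boxProd T').induce ((↑S : Set (V × W))ᶜ)).IsAcyclic} = n - 1 := hdn
    have hmem := Nat.sInf_mem hne
    rw [hdn'] at hmem
    obtain ⟨S, hScard, hSac⟩ := hmem
    obtain ⟨m, hm⟩ := DecyclingAux.star_of_card_eq hn hn' h2 hnn' hT hT' hScard hSac
    exact DecyclingAux.iso_star_of_center hn' (by omega) hT' m hm
  · rintro ⟨φ⟩
    haveI : NeZero n' := ⟨by omega⟩
    set m : W := φ.symm 0 with hmdef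
    have hval : ∀ c : W, ((φ c : Fin n')).val = 0 ↔ c = m := by
      intro c
      rw [show (((φ c : Fin n')).val = 0 ↔ (φ c : Fin n') = 0) from by
        rw [Fin.ext_iff, Fin.val_zero]]
      constructor
      · intro h
        have := congrArg φ.symm h
        rwa [φ.symm_apply_apply] at this
      · intro h
        rw [h, hmdef]
        exact φ.apply_symm_apply 0
    have hAdjIff : ∀ a b, T'.Adj a b ↔ a ≠ b ∧ (a = m ∨ b = m) := by
      intro a b
      rw [← φ.map_rel_iff]
      show ((φ a ≠ φ b) ∧ ((φ a : Fin n').val = 0 ∨ (φ b : Fin n').val = 0)) ↔ _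
      rw [hval a, hval b]
      constructor
      · rintro ⟨hne', hor⟩
        exact ⟨fun h => hne' (by rw [h]), hor⟩
      · rintro ⟨hne', hor⟩
        refine ⟨fun h => hne' (φ.injective h), hor⟩
    obtain ⟨v0⟩ := (inferInstance : Nonempty V)
    have hacyc := DecyclingAux.star_construction hT m hAdjIff v0
    have hcard : ((Finset.univ.erase v0) ×ˢ ({m} : Finset W)).card = n - 1 := by
      rw [Finset.card_product, Finset.card_erase_of_mem (Finset.mem_univ _),
        Finset.card_univ, hn, Finset.card_singleton, mul_one]
    apply le_antisymm
    · exact Nat.sInf_le ⟨_, hcard, hacyc⟩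
    · refine le_csInf hne ?_
      rintro k ⟨S, hSc, hSa⟩
      rw [← hSc]
      exact hLB S hSa
end

section
/- If T and T' are trees of respective orders n and n' with 2 ≤ n ≤ n', then the forest number satisfies f(T □ T') ≤ n·n' − n + 1. -/
open SimpleGraph

/-!
If a set `S` of vertices of `G □ H` misses at most `min |G| |H| - 2` vertices, two whole
`G`-layers `G × {b₁, b₂}` and two whole `H`-layers `{a₁, a₂} × H` lie in `S`. With `G` and `H`
connected, the rectangle they span carries two different paths from `(a₁, b₁)` to `(a₂, b₂)`:
one through the corner `(a₁, b₂)` and one (inside the other two sides) avoiding it. So `S` cannot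
induce a forest.
-/

open Finset

theorem Finset.exists_two_fibers_subset_of_card_compl_add_two_le {α ι : Type*} [Fintype α]
    [DecidableEq α] [Fintype ι] [DecidableEq ι] (S : Finset α) (f : α → ι)
    (h : #Sᶜ + 2 ≤ Fintype.card ι) : ∃ i j, i ≠ j ∧ ∀ x, f x = i ∨ f x = j → x ∈ S := by
  have : 1 < #(Sᶜ.image f)ᶜ := by
    have := Sᶜ.card_image_le (f := f)
    rw [card_compl]
    omega
  obtain ⟨i, hi, j, hj, hij⟩ := one_lt_card.mp this
  refine ⟨i, j, hij, fun x hx => by_contra fun hxS => ?_⟩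
  rcases hx with rfl | rfl
  exacts [mem_compl.mp hi (mem_image_of_mem f (mem_compl.mpr hxS)),
    mem_compl.mp hj (mem_image_of_mem f (mem_compl.mpr hxS))]

namespace SimpleGraph

variable {V W : Type*} {G : SimpleGraph V} {H : SimpleGraph W}

namespace Walk

lemma IsPath.append_of_forall_mem_support {u v w : V} {p : G.Walk u v} {q : G.Walk v w}
    (hp : p.IsPath) (hq : q.IsPath) (h : ∀ x ∈ p.support, x ∈ q.support → x = v) :
    (p.append q).IsPath := by
  rw [isPath_def, support_append, List.nodup_append]
  refine ⟨hp.support_nodup, hq.support_nodup.sublist q.support.tail_sublist, ?_⟩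
  rintro x hxp y hyq rfl
  have hq' := hq.support_nodup
  rw [← q.cons_tail_support] at hq'
  rw [h x hxp (List.mem_of_mem_tail hyq)] at hyq
  exact (List.nodup_cons.mp hq').1 hyq

lemma snd_eq_of_mem_support_boxProdLeft {a₁ a₂ : V} {b : W} {p : G.Walk a₁ a₂} {x : V × W}
    (hx : x ∈ (p.boxProdLeft H b).support) : x.2 = b := by
  have hx' : x ∈ (p.map (G.boxProdLeft H b).toHom).support := hx
  rw [support_map, List.mem_map] at hx'
  obtain ⟨a, -, rfl⟩ := hx'
  rfl

lemma fst_eq_of_mem_support_boxProdRight {b₁ b₂ : W} {a : V} {q : H.Walk b₁ b₂} {x : V × W}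
    (hx : x ∈ (q.boxProdRight G a).support) : x.1 = a := by
  have hx' : x ∈ (q.map (G.boxProdRight H a).toHom).support := hx
  rw [support_map, List.mem_map] at hx'
  obtain ⟨b, -, rfl⟩ := hx'
  rfl

lemma IsPath.boxProdRight_append_boxProdLeft {a₁ a₂ : V} {b₁ b₂ : W} {q : H.Walk b₁ b₂}
    {p : G.Walk a₁ a₂} (hq : q.IsPath) (hp : p.IsPath) :
    ((q.boxProdRight G a₁).append (p.boxProdLeft H b₂)).IsPath := by
  refine IsPath.append_of_forall_mem_support (hq.map (G.boxProdRight H a₁).injective)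
    (hp.map (G.boxProdLeft H b₂).injective) fun x hx₁ hx₂ => ?_
  exact Prod.ext (fst_eq_of_mem_support_boxProdRight hx₁) (snd_eq_of_mem_support_boxProdLeft hx₂)

end Walk

lemma IsAcyclic.eq_of_isPath_of_support_subset {s : Set V} (hs : (G.induce s).IsAcyclic)
    {u v : V} {p q : G.Walk u v} (hp : p.IsPath) (hq : q.IsPath)
    (hps : ∀ x ∈ p.support, x ∈ s) (hqs : ∀ x ∈ q.support, x ∈ s) : p = q := by
  have lift_isPath {r : G.Walk u v} (hr : r.IsPath) (hrs : ∀ x ∈ r.support, x ∈ s) :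
      (r.induce s hrs).IsPath := by
    refine Walk.IsPath.of_map (f := (Embedding.induce (G := G) s).toHom) ?_
    rwa [Walk.map_induce]
  have h := congrArg (fun r : (G.induce s).Path _ _ => r.1.map (Embedding.induce (G := G) s).toHom)
    ((hs.subsingleton_path _ _).elim ⟨_, lift_isPath hp hps⟩ ⟨_, lift_isPath hq hqs⟩)
  simpa [Walk.map_induce] using h

theorem not_isAcyclic_induce_boxProd_s9 (hG : G.Preconnected) (hH : H.Preconnected)
    {s : Set (V × W)} {a₁ a₂ : V} {b₁ b₂ : W} (ha : a₁ ≠ a₂) (hb : b₁ ≠ b₂)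
    (hcols : ∀ b, (a₁, b) ∈ s ∧ (a₂, b) ∈ s) (hrows : ∀ a, (a, b₁) ∈ s ∧ (a, b₂) ∈ s) :
    ¬ ((G □ H).induce s).IsAcyclic := by
  classical
  intro hs
  obtain ⟨p, hp⟩ := hG.exists_isPath a₁ a₂
  obtain ⟨q, hq⟩ := hH.exists_isPath b₁ b₂
  let up := (q.boxProdRight G a₁).append (p.boxProdLeft H b₂)
  let down := (p.boxProdLeft H b₁).append (q.boxProdRight G a₂)
  have mem_up {x} (hx : x ∈ up.support) : x.1 = a₁ ∨ x.2 = b₂ := by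
    rcases (Walk.mem_support_append_iff _ _).mp hx with hx | hx
    · exact .inl (Walk.fst_eq_of_mem_support_boxProdRight hx)
    · exact .inr (Walk.snd_eq_of_mem_support_boxProdLeft hx)
  have mem_down {x} (hx : x ∈ down.support) : x.2 = b₁ ∨ x.1 = a₂ := by
    rcases (Walk.mem_support_append_iff _ _).mp hx with hx | hx
    · exact .inl (Walk.snd_eq_of_mem_support_boxProdLeft hx)
    · exact .inr (Walk.fst_eq_of_mem_support_boxProdRight hx)
  have hup_down : up = down.bypass := by
    refine hs.eq_of_isPath_of_support_subset (hq.boxProdRight_append_boxProdLeft hp)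
      down.bypass_isPath (fun ⟨x₁, x₂⟩ hx => ?_) (fun ⟨x₁, x₂⟩ hx => ?_)
    · rcases mem_up hx with rfl | rfl
      exacts [(hcols x₂).1, (hrows x₁).2]
    · rcases mem_down (down.support_bypass_subset_support hx) with rfl | rfl
      exacts [(hrows x₁).1, (hcols x₂).2]
  have hcorner : (a₁, b₂) ∈ up.support :=
    (Walk.mem_support_append_iff _ _).mpr (.inl (Walk.end_mem_support _))
  rw [hup_down] at hcorner
  rcases mem_down (down.support_bypass_subset_support hcorner) with h | h
  · exact hb h.symm
  · exact ha h

theorem card_add_min_card_le_of_isAcyclic_induce_boxProd [Fintype V] [Fintype W]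
    (hG : G.Preconnected) (hH : H.Preconnected) (S : Finset (V × W))
    (hS : ((G □ H).induce (S : Set (V × W))).IsAcyclic) :
    #S + min (Fintype.card V) (Fintype.card W) ≤ Fintype.card V * Fintype.card W + 1 := by
  classical
  have hsplit : #S + #Sᶜ = Fintype.card V * Fintype.card W := by
    rw [card_add_card_compl, Fintype.card_prod]
  by_contra! h
  obtain ⟨a₁, a₂, ha, hcols⟩ := S.exists_two_fibers_subset_of_card_compl_add_two_le Prod.fst
    (by omega)
  obtain ⟨b₁, b₂, hb, hrows⟩ := S.exists_two_fibers_subset_of_card_compl_add_two_le Prod.snd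
    (by omega)
  exact not_isAcyclic_induce_boxProd_s9 hG hH ha hb
    (fun b => ⟨hcols (a₁, b) (.inl rfl), hcols (a₂, b) (.inr rfl)⟩)
    (fun a => ⟨hrows (a, b₁) (.inl rfl), hrows (a, b₂) (.inr rfl)⟩) hS

end SimpleGraph

theorem forest_boxProd_trees_upper_bound_general
    {V W : Type*} [Fintype V] [Fintype W]
    (T : SimpleGraph V) (T' : SimpleGraph W) (n n' : ℕ)
    (hn : Fintype.card V = n) (hn' : Fintype.card W = n')
    (hnn' : n ≤ n')
    (hT : T.IsTree) (hT' : T'.IsTree) :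
    forestNumber (T.boxProd T') ≤ n * n' - n + 1 := by
  refine csSup_le' ?_
  rintro k ⟨S, rfl, hS⟩
  have := card_add_min_card_le_of_isAcyclic_induce_boxProd hT.connected.preconnected
    hT'.connected.preconnected S hS
  rw [hn, hn', min_eq_left hnn'] at this
  omega

theorem forest_boxProd_trees_upper_bound
    {V W : Type*} [Fintype V] [Fintype W]
    (T : SimpleGraph V) (T' : SimpleGraph W) (n n' : ℕ)
    (hn : Fintype.card V = n) (hn' : Fintype.card W = n')
    (h2 : 2 ≤ n) (hnn' : n ≤ n')
    (hT : T.IsTree) (hT' : T'.IsTree) :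
    forestNumber (T.boxProd T') ≤ n * n' - n + 1 :=
  forest_boxProd_trees_upper_bound_general T T' n n' hn hn' hnn' hT hT'
end
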